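/- arXiv:1308.2798 — 4 statements merged into one kernel-verified Lean document; each statement's English description precedes it below -/
import Mathlib

section
/- Let p, q be distinct odd primes with gcd(p-1,q-1) = 2, ord_p(2) = p-1, ord_q(2) = q-1, and suppose 2 divides (p-1)(q-1)/4. Let e be a positive integer with gcd(e, (p-1)(q-1)) = 1. Then for every i with 0 ≤ i ≤ (p-1)(q-1)/2 - 1, one has (2^e)^i ≢ -1 (mod pq). -/
lemma aux_par (p n : ℕ) (hp : p.Prime) (hpodd : Odd p)
    (hord : orderOf (2 : ZMod p) = p - 1) (h : (2 : ZMod p) ^ n = -1) :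
    n % 2 = ((p - 1) / 2) % 2 := by
  haveI : Fact p.Prime := ⟨hp⟩
  have hp2 : 2 < p := by
    have h2 := hp.two_le
    have : p ≠ 2 := by rintro rfl; exact absurd hpodd (by decide)
    omega
  haveI : Fact (2 < p) := ⟨hp2⟩
  have hne1 : (-1 : ZMod p) ≠ 1 := ZMod.neg_one_ne_one
  have h1 : (2 : ZMod p) ^ (n * 2) = 1 := by
    rw [pow_mul, h]; ring
  have hdvd2 : (p - 1) ∣ n * 2 := hord ▸ orderOf_dvd_of_pow_eq_one h1
  have hndvd : ¬ (p - 1) ∣ n := by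
    intro hd
    have : (2 : ZMod p) ^ n = 1 := by
      rw [← hord] at hd
      exact orderOf_dvd_iff_pow_eq_one.mp hd
    rw [h] at this
    exact hne1 this
  obtain ⟨a, ha⟩ : ∃ a, p - 1 = 2 * a := by
    have : Even (p - 1) := Nat.Odd.sub_odd hpodd odd_one
    obtain ⟨a, ha⟩ := this
    exact ⟨a, by omega⟩
  have hadvd : a ∣ n := by
    have : 2 * a ∣ 2 * n := by rw [← ha]; rw [mul_comm 2 n]; exact hdvd2
    exact (mul_dvd_mul_iff_left (by norm_num : (2:ℕ) ≠ 0)).mp this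
  obtain ⟨k, hk⟩ := hadvd
  have hkodd : k % 2 = 1 := by
    rcases Nat.even_or_odd k with hke | hko
    · obtain ⟨m, hm⟩ := hke
      exfalso
      apply hndvd
      rw [ha, hk, hm]
      exact ⟨m, by ring⟩
    · obtain ⟨m, hm⟩ := hko
      omega
  have ha2 : (p - 1) / 2 = a := by omega
  rw [hk, ha2, Nat.mul_mod, hkodd, mul_one]
  omega

theorem stmt7 (p q e : ℕ) (hp : p.Prime) (hq : q.Prime) (hpodd : Odd p) (hqodd : Odd q)
    (hne : p ≠ q) (hgcd : Nat.gcd (p - 1) (q - 1) = 2)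
    (hordp : orderOf (2 : ZMod p) = p - 1) (hordq : orderOf (2 : ZMod q) = q - 1)
    (hdiv : 2 ∣ (p - 1) * (q - 1) / 4)
    (he : 0 < e) (hegcd : Nat.gcd e ((p - 1) * (q - 1)) = 1) :
    ∀ i : ℕ, i ≤ (p - 1) * (q - 1) / 2 - 1 → ((2 : ZMod (p * q)) ^ e) ^ i ≠ -1 := by
  intro i _ hcon
  rw [← pow_mul] at hcon
  set n := e * i with hn
  have hcp : (2 : ZMod p) ^ n = -1 := by
    have h' := hcon
    apply_fun (ZMod.castHom (dvd_mul_right p q) (ZMod p)) at h'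
    rwa [map_pow, map_neg, map_one, map_ofNat] at h'
  have hcq : (2 : ZMod q) ^ n = -1 := by
    have h' := hcon
    apply_fun (ZMod.castHom (dvd_mul_left q p) (ZMod q)) at h'
    rwa [map_pow, map_neg, map_one, map_ofNat] at h' 
  have h1 := aux_par p n hp hpodd hordp hcp
  have h2 := aux_par q n hq hqodd hordq hcq
  obtain ⟨a, ha⟩ : ∃ a, p - 1 = 2 * a := by
    obtain ⟨a, ha⟩ := Nat.Odd.sub_odd hpodd odd_one
    exact ⟨a, by omega⟩
  obtain ⟨b, hb⟩ : ∃ b, q - 1 = 2 * b := by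
    obtain ⟨b, hb⟩ := Nat.Odd.sub_odd hqodd odd_one
    exact ⟨b, by omega⟩
  have hab : Nat.gcd a b = 1 := by
    rw [ha, hb, Nat.gcd_mul_left] at hgcd
    omega
  have hprod : (p - 1) * (q - 1) = 4 * (a * b) := by rw [ha, hb]; ring
  rw [hprod, Nat.mul_div_cancel_left _ (by norm_num : 0 < 4)] at hdiv
  have hor : 2 ∣ a ∨ 2 ∣ b := (Nat.Prime.dvd_mul Nat.prime_two).mp hdiv
  have hnand : ¬ (2 ∣ a ∧ 2 ∣ b) := by
    rintro ⟨h2a, h2b⟩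
    have := Nat.dvd_gcd h2a h2b
    rw [hab] at this
    omega
  have ha2 : (p - 1) / 2 = a := by omega
  have hb2 : (q - 1) / 2 = b := by omega
  rw [ha2] at h1
  rw [hb2] at h2
  omega
end

section
/- Let p, q be distinct odd primes with gcd(p-1,q-1)=2, ord_p(2)=p-1, ord_q(2)=q-1, 2 | (p-1)(q-1)/4, and let e satisfy gcd(e,(p-1)(q-1)) = 1. Then the pq-th cyclotomic polynomial Q_{pq}(x) factors over GF(2^e) as a product of exactly two distinct irreducible polynomials g(x) and g*(x), each of degree (p-1)(q-1)/2, where g* is the reciprocal polynomial of g (the minimal polynomials of α and α^{-1} for α a primitive pq-th root of unity). -/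
open Polynomial Finset

lemma fixed_mem_range {F K : Type*} [Field F] [Fintype F] [Field K] [Algebra F K]
    (x : K) (hx : x ^ (Fintype.card F) = x) : x ∈ Set.range (algebraMap F K) := by
  classical
  have hQ2 : 2 ≤ Fintype.card F := Fintype.one_lt_card
  set P : K[X] := X ^ (Fintype.card F) - X with hP
  have hPne : P ≠ 0 := by
    intro h
    have := congrArg (fun r => Polynomial.coeff r (Fintype.card F)) h
    simp only [hP, Polynomial.coeff_sub, Polynomial.coeff_X_pow, if_pos rfl,
      Polynomial.coeff_X, Polynomial.coeff_zero] at this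
    rw [if_neg (by omega : ¬ (1 = Fintype.card F))] at this
    simp at this
  have hdeg : P.natDegree ≤ Fintype.card F := by
    refine le_trans (Polynomial.natDegree_sub_le _ _) ?_
    simp
    omega
  have hroot : ∀ a : F, (algebraMap F K a) ∈ P.roots := by
    intro a
    rw [Polynomial.mem_roots hPne]
    simp only [hP, Polynomial.IsRoot, Polynomial.eval_sub, Polynomial.eval_pow,
      Polynomial.eval_X, ← map_pow, FiniteField.pow_card, sub_self]
  have hxroot : x ∈ P.roots := by
    rw [Polynomial.mem_roots hPne]
    simp [hP, Polynomial.IsRoot, hx]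
  set T : Finset K := Finset.univ.image (algebraMap F K) with hT
  have hTcard : T.card = Fintype.card F := by
    rw [hT, Finset.card_image_of_injective _ (algebraMap F K).injective, Finset.card_univ]
  have hsub : T ⊆ P.roots.toFinset := by
    intro y hy
    rw [hT, Finset.mem_image] at hy
    obtain ⟨a, -, rfl⟩ := hy
    exact Multiset.mem_toFinset.2 (hroot a)
  have hle : P.roots.toFinset.card ≤ Fintype.card F :=
    le_trans (Multiset.toFinset_card_le _) (le_trans (Polynomial.card_roots' P) hdeg)
  have : T = P.roots.toFinset := Finset.eq_of_subset_of_card_le hsub (by omega)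
  have := this ▸ (Multiset.mem_toFinset.2 hxroot)
  rw [hT, Finset.mem_image] at this
  obtain ⟨a, -, ha⟩ := this
  exact ⟨a, ha⟩

lemma prim_pow_eq_of_zmod {K : Type*} [CommMonoid K] {n : ℕ} (hn : 0 < n) {ξ : K}
    (hξ : IsPrimitiveRoot ξ n) {a b : ℕ} (h : (a : ZMod n) = (b : ZMod n)) :
    ξ ^ a = ξ ^ b := by
  have hmod : a % n = b % n := by
    have := (ZMod.natCast_eq_natCast_iff a b n).1 h
    exact this
  have ho : n = orderOf ξ := hξ.eq_orderOf
  rw [← pow_mod_orderOf ξ a, ← pow_mod_orderOf ξ b, ← ho, hmod]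

lemma monic_eq_of_dvd {F : Type*} [Field F] {A B : F[X]} (hA : A.Monic) (hB : B.Monic)
    (h : B ∣ A) (hdeg : A.natDegree ≤ B.natDegree) : A = B := by
  obtain ⟨c, hc⟩ := h
  have hBne : B ≠ 0 := hB.ne_zero
  have hcne : c ≠ 0 := by rintro rfl; rw [mul_zero] at hc; exact hA.ne_zero hc
  have hdeg' : A.natDegree = B.natDegree + c.natDegree := by
    rw [hc, Polynomial.natDegree_mul hBne hcne]
  have hc0 : c.natDegree = 0 := by omega
  obtain ⟨a, rfl⟩ := Polynomial.natDegree_eq_zero.1 hc0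
  have : A.leadingCoeff = B.leadingCoeff * a := by
    rw [hc, Polynomial.leadingCoeff_mul, Polynomial.leadingCoeff_C]
  rw [hA.leadingCoeff, hB.leadingCoeff, one_mul] at this
  rw [hc, ← this, map_one, mul_one]

lemma minpoly_primroot {F K : Type} [Field F] [Fintype F] [Field K] [Algebra F K]
    [CharP K 2] {e' : ℕ} (hcard : Fintype.card F = 2 ^ e')
    {n d : ℕ} (hn : 0 < n) (hd : 0 < d)
    {ξ : K} (hξ : IsPrimitiveRoot ξ n)
    (hQd : ((Fintype.card F : ZMod n)) ^ d = 1)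
    (hinj : ∀ i < d, ∀ j < d, ((Fintype.card F : ZMod n)) ^ i = (Fintype.card F : ZMod n) ^ j
      → i = j) :
    (minpoly F ξ).natDegree = d ∧
    (minpoly F ξ).map (algebraMap F K) =
      ∏ i ∈ Finset.range d, (X - C (ξ ^ (Fintype.card F) ^ i)) := by
  classical
  haveI : Fact (Nat.Prime 2) := ⟨Nat.prime_two⟩
  set Q := Fintype.card F with hQdef
  -- Frobenius x ↦ x^Q as a ring hom
  set f0 : K →+* K := iterateFrobenius K 2 e' with hf0
  have hf0apply : ∀ x : K, f0 x = x ^ Q := by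
    intro x; rw [hf0, iterateFrobenius_def, ← hcard]
  have hfix : ∀ a : F, f0 (algebraMap F K a) = algebraMap F K a := by
    intro a; rw [hf0apply, ← map_pow, FiniteField.pow_card]
  set fA : K →ₐ[F] K := { toRingHom := f0, commutes' := hfix } with hfA
  have hfAapply : ∀ x : K, fA x = x ^ Q := hf0apply
  -- ξ is integral
  have hξn : ξ ^ n = 1 := hξ.pow_eq_one
  have hint : IsIntegral F ξ := by
    refine ⟨X ^ n - C 1, Polynomial.monic_X_pow_sub_C 1 hn.ne', ?_⟩
    simp [Polynomial.eval₂_sub, hξn]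
  set g := minpoly F ξ with hg
  have hgmonic : g.Monic := minpoly.monic hint
  set gK := g.map (algebraMap F K) with hgK
  have hgKmonic : gK.Monic := hgmonic.map _
  -- roots r i
  set r : ℕ → K := fun i => ξ ^ (Q ^ i) with hr
  have hrsucc : ∀ i, r (i + 1) = (r i) ^ Q := by
    intro i; rw [hr]; simp only []
    rw [pow_succ, pow_mul]
  have hrd0 : r d = r 0 := by
    apply prim_pow_eq_of_zmod hn hξ
    push_cast
    simp [hQd]
  -- each r i is a root of g (over K)
  have hroot : ∀ i, Polynomial.aeval (r i) g = 0 := by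
    intro i
    induction i with
    | zero =>
      have : r 0 = ξ := by rw [hr]; simp
      rw [this]; exact minpoly.aeval F ξ
    | succ i ih =>
      have : r (i + 1) = fA (r i) := by rw [hrsucc, hfAapply]
      rw [this, Polynomial.aeval_algHom_apply, ih, map_zero]
  -- the r i, i < d, are pairwise distinct
  have hrinj : ∀ i < d, ∀ j < d, r i = r j → i = j := by
    intro i hi j hj hij
    apply hinj i hi j hj
    have h1 : ξ ^ (Q ^ i % n) = ξ ^ (Q ^ j % n) := by
      have ho : n = orderOf ξ := hξ.eq_orderOf
      rw [ho] at *
      rwa [pow_mod_orderOf, pow_mod_orderOf]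
    have h2 : Q ^ i % n = Q ^ j % n :=
      hξ.pow_inj (Nat.mod_lt _ hn) (Nat.mod_lt _ hn) h1
    have := (ZMod.natCast_eq_natCast_iff _ _ _).2 h2
    push_cast at this ⊢
    exact this
  -- lower bound on degree
  have hgne : g ≠ 0 := minpoly.ne_zero hint
  have hgKne : gK ≠ 0 := by
    rw [hgK]; exact (Polynomial.map_ne_zero_iff (algebraMap F K).injective).2 hgne
  have hlow : d ≤ g.natDegree := by
    have hT : ((Finset.range d).image r).card = d := by
      rw [Finset.card_image_of_injOn, Finset.card_range]
      intro i hi j hj hij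
      exact hrinj i (Finset.mem_range.1 hi) j (Finset.mem_range.1 hj) hij
    have hsub : (Finset.range d).image r ⊆ gK.roots.toFinset := by
      intro y hy
      obtain ⟨i, -, rfl⟩ := Finset.mem_image.1 hy
      rw [Multiset.mem_toFinset, Polynomial.mem_roots hgKne]
      rw [Polynomial.IsRoot, hgK, Polynomial.eval_map, ← Polynomial.aeval_def]
      exact hroot i
    calc d = ((Finset.range d).image r).card := hT.symm
      _ ≤ gK.roots.toFinset.card := Finset.card_le_card hsub
      _ ≤ Multiset.card gK.roots := Multiset.toFinset_card_le _
      _ ≤ gK.natDegree := Polynomial.card_roots' gK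
      _ = g.natDegree := Polynomial.natDegree_map _
  -- the product polynomial h
  set h : K[X] := ∏ i ∈ Finset.range d, (X - C (r i)) with hh
  have hhmonic : h.Monic :=
    Polynomial.monic_prod_of_monic _ _ (fun i _ => Polynomial.monic_X_sub_C _)
  have hhdeg : h.natDegree = d := by
    rw [hh, Polynomial.natDegree_prod _ _ (fun i _ => Polynomial.X_sub_C_ne_zero _)]
    simp [Polynomial.natDegree_X_sub_C]
  -- h is fixed by Frobenius
  have hmap : h.map f0 = h := by
    have h1 : h.map f0 = ∏ i ∈ Finset.range d, (X - C (r (i + 1))) := by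
      rw [hh, Polynomial.map_prod]
      refine Finset.prod_congr rfl (fun i _ => ?_)
      rw [Polynomial.map_sub, Polynomial.map_X, Polynomial.map_C, hf0apply, ← hrsucc]
    have h2 : (h.map f0) * (X - C (r 0)) = h * (X - C (r 0)) := by
      rw [h1, ← Finset.prod_range_succ' (fun i => X - C (r i)) d]
      rw [Finset.prod_range_succ (fun i => X - C (r i)) d, hrd0, hh]
    exact mul_right_cancel₀ (Polynomial.X_sub_C_ne_zero _) h2
  -- coefficients of h lie in F
  have hlifts : h ∈ Polynomial.lifts (algebraMap F K) := by
    rw [Polynomial.lifts_iff_coeff_lifts]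
    intro m
    apply fixed_mem_range
    have := congrArg (fun P => Polynomial.coeff P m) hmap
    simpa [Polynomial.coeff_map, hf0apply] using this
  obtain ⟨h', hh'map, hh'deg, hh'monic⟩ :=
    Polynomial.lifts_and_degree_eq_and_monic hlifts hhmonic
  -- g divides h'
  have hξroot : Polynomial.eval ξ h = 0 := by
    rw [hh, Polynomial.eval_prod]
    refine Finset.prod_eq_zero (Finset.mem_range.2 hd) ?_
    have : r 0 = ξ := by rw [hr]; simp
    simp [this]
  have hgdvd : g ∣ h' := by
    apply minpoly.dvd
    rw [Polynomial.aeval_def, ← Polynomial.eval_map, hh'map]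
    exact hξroot
  have hh'deg' : h'.natDegree = d := by
    rw [Polynomial.natDegree_eq_of_degree_eq hh'deg, hhdeg]
  have hup : g.natDegree ≤ d :=
    hh'deg' ▸ Polynomial.natDegree_le_of_dvd hgdvd hh'monic.ne_zero
  have hdegfin : g.natDegree = d := le_antisymm hup hlow
  have hdvdK : gK ∣ h := by
    rw [← hh'map, hgK]
    exact Polynomial.map_dvd _ hgdvd
  have hfin : h = gK := by
    apply monic_eq_of_dvd hhmonic hgKmonic hdvdK
    rw [hhdeg, hgK, Polynomial.natDegree_map, hdegfin]
  exact ⟨hdegfin, hfin.symm⟩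

lemma half_parity {p m : ℕ} (hp : p.Prime) (hpodd : Odd p)
    (hord : orderOf (2 : ZMod p) = p - 1) (hm : (2 : ZMod p) ^ m = -1) :
    (2 ∣ m ↔ 2 ∣ (p - 1) / 2) := by
  have hp2 := hp.two_le
  have hpo := Nat.odd_iff.1 hpodd
  have hp3 : 3 ≤ p := by omega
  haveI : Fact (2 < p) := ⟨by omega⟩
  have hne : (-1 : ZMod p) ≠ 1 := ZMod.neg_one_ne_one
  have hsq : (2 : ZMod p) ^ (m * 2) = 1 := by rw [pow_mul, hm, neg_one_sq]
  have h1 : (p - 1) ∣ m * 2 := hord ▸ orderOf_dvd_of_pow_eq_one hsq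
  have h2 : ¬(p - 1) ∣ m := by
    intro hdvd
    have : (2 : ZMod p) ^ m = 1 := orderOf_dvd_iff_pow_eq_one.1 (hord ▸ hdvd)
    exact hne (by rw [← hm, this])
  have hP2 : p - 1 = 2 * ((p - 1) / 2) := by omega
  set P := (p - 1) / 2 with hP
  have hP0 : P ≠ 0 := by omega
  have hPm : P ∣ m := by
    have h2m : 2 * P ∣ 2 * m := by rw [← hP2]; rwa [mul_comm m 2] at h1
    exact (mul_dvd_mul_iff_left (by norm_num : (2:ℕ) ≠ 0)).1 h2m
  obtain ⟨k, hk⟩ := hPm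
  have hkodd : ¬ 2 ∣ k := by
    rintro ⟨t, rfl⟩
    exact h2 ⟨t, by rw [hk, hP2]; ring⟩
  constructor
  · intro hm2
    rw [hk] at hm2
    rcases (Nat.prime_two.dvd_mul).1 hm2 with h | h
    · exact h
    · exact absurd h hkodd
  · intro h
    rw [hk]
    exact Dvd.dvd.mul_right h k

lemma nt_facts {p q e : ℕ} (hp : p.Prime) (hq : q.Prime) (hpodd : Odd p) (hqodd : Odd q)
    (hne : p ≠ q) (hgcd : Nat.gcd (p - 1) (q - 1) = 2)
    (hordp : orderOf (2 : ZMod p) = p - 1) (hordq : orderOf (2 : ZMod q) = q - 1)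
    (hdiv : 2 ∣ (p - 1) * (q - 1) / 4)
    (hegcd : Nat.gcd e ((p - 1) * (q - 1)) = 1) :
    ((2 ^ e : ℕ) : ZMod (p * q)) ^ ((p - 1) * (q - 1) / 2) = 1 ∧
    (∀ i < (p - 1) * (q - 1) / 2, ∀ j < (p - 1) * (q - 1) / 2,
      ((2 ^ e : ℕ) : ZMod (p * q)) ^ i = ((2 ^ e : ℕ) : ZMod (p * q)) ^ j → i = j) ∧
    (∀ i, ((2 ^ e : ℕ) : ZMod (p * q)) ^ i ≠ -1) := by
  have hp2 := hp.two_le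
  have hq2 := hq.two_le
  have hpo := Nat.odd_iff.1 hpodd
  have hqo := Nat.odd_iff.1 hqodd
  have hp3 : 3 ≤ p := by omega
  have hq3 : 3 ≤ q := by omega
  have hcop : p.Coprime q := (Nat.coprime_primes hp hq).2 hne
  haveI : NeZero (p * q) := ⟨by positivity⟩
  have hno : (p * q) % 2 = 1 := Nat.odd_iff.1 (hpodd.mul hqodd)
  have h2n : Nat.Coprime 2 (p * q) :=
    (Nat.prime_two.coprime_iff_not_dvd).2 (by omega)
  -- the order of 2 mod pq
  have horder2 : orderOf (2 : ZMod (p * q)) = Nat.lcm (p - 1) (q - 1) := by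
    let ψ := ZMod.chineseRemainder hcop
    have hinj : Function.Injective ψ.toMulEquiv.toMonoidHom := ψ.toMulEquiv.injective
    have h1 : orderOf (2 : ZMod (p * q)) = orderOf (ψ (2 : ZMod (p * q))) :=
      (orderOf_injective ψ.toMulEquiv.toMonoidHom hinj 2).symm
    have h2 : ψ (2 : ZMod (p * q)) = ((2 : ZMod p), (2 : ZMod q)) := by
      have := map_ofNat (ψ : ZMod (p * q) →+* ZMod p × ZMod q) 2
      simp at this
      rw [this]; rfl
    rw [h1, h2, Prod.orderOf]
    simp only [hordp, hordq]
  set d := (p - 1) * (q - 1) / 2 with hd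
  have hlcm : Nat.lcm (p - 1) (q - 1) = d := by
    have := Nat.gcd_mul_lcm (p - 1) (q - 1)
    rw [hgcd] at this
    omega
  have hdd : 2 * d = (p - 1) * (q - 1) := by
    obtain ⟨a, ha⟩ : 2 ∣ (p - 1) := by omega
    have hb : (p - 1) * (q - 1) = 2 * (a * (q - 1)) := by rw [ha]; ring
    omega
  have hd0 : 0 < d := by
    have h4 : 2 * 2 ≤ (p - 1) * (q - 1) := Nat.mul_le_mul (by omega) (by omega)
    omega
  -- units
  set u : (ZMod (p * q))ˣ := ZMod.unitOfCoprime 2 h2n with hu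
  have hucoe : ((u : ZMod (p * q))) = (2 : ZMod (p * q)) := by
    rw [hu, ZMod.coe_unitOfCoprime]; norm_num
  have horderu : orderOf u = d := by
    rw [← orderOf_units, hucoe, horder2, hlcm]
  have hcopde : Nat.Coprime (orderOf u) e := by
    rw [horderu]
    have hdvd : d ∣ (p - 1) * (q - 1) := ⟨2, by omega⟩
    exact ((Nat.Coprime.symm hegcd).coprime_dvd_left hdvd)
  set w : (ZMod (p * q))ˣ := u ^ e with hw
  have horderw : orderOf w = d := by
    rw [hw, Nat.Coprime.orderOf_pow hcopde, horderu]
  have hwcoe : ((w : ZMod (p * q))) = ((2 ^ e : ℕ) : ZMod (p * q)) := by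
    rw [hw, Units.val_pow_eq_pow_val, hucoe]
    push_cast
    ring
  refine ⟨?_, ?_, ?_⟩
  · have h1 : w ^ d = 1 := horderw ▸ pow_orderOf_eq_one w
    rw [← hwcoe, ← Units.val_pow_eq_pow_val, h1, Units.val_one]
  · intro i hi j hj hij
    have : w ^ i = w ^ j := by
      apply Units.ext
      show ((w : ZMod (p*q)))^i = ((w : ZMod (p*q)))^j
      rw [hwcoe]; exact hij
    exact pow_injOn_Iio_orderOf (by rwa [horderw]) (by rwa [horderw]) this
  · intro i hi
    -- project to ZMod p and ZMod q
    have hproj : ∀ (s : ℕ), s.Prime → Odd s → s ∣ p * q → orderOf (2 : ZMod s) = s - 1 →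
        (2 ∣ e * i ↔ 2 ∣ (s - 1) / 2) := by
      intro s hs hso hdvd hords
      apply half_parity hs hso hords
      have := congrArg (ZMod.castHom hdvd (ZMod s)) hi
      rw [map_pow, map_natCast, map_neg, map_one] at this
      rw [pow_mul]
      rw [← this]
      push_cast
      ring
    have hP := hproj p hp hpodd (dvd_mul_right p q) hordp
    have hQ := hproj q hq hqodd (dvd_mul_left q p) hordq
    -- parity contradiction
    set P := (p - 1) / 2 with hPdef
    set Q' := (q - 1) / 2 with hQdef
    have hp1 : p - 1 = 2 * P := by omega
    have hq1 : q - 1 = 2 * Q' := by omega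
    have hgcd1 : Nat.gcd P Q' = 1 := by
      have := Nat.gcd_mul_left 2 P Q'
      rw [← hp1, ← hq1, hgcd] at this
      omega
    have hPQ : 2 ∣ P * Q' := by
      have h4 : (p - 1) * (q - 1) = 4 * (P * Q') := by rw [hp1, hq1]; ring
      rw [h4] at hdiv
      omega
    have hiff : (2 ∣ P ↔ 2 ∣ Q') := by rw [← hP, hQ]
    rcases (Nat.prime_two.dvd_mul).1 hPQ with h | h
    · have h2 : 2 ∣ Q' := hiff.1 h
      have := Nat.dvd_gcd h h2
      rw [hgcd1] at this
      omega
    · have h2 : 2 ∣ P := hiff.2 h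
      have := Nat.dvd_gcd h2 h
      rw [hgcd1] at this
      omega

theorem stmt8 (p q e : ℕ) (hp : p.Prime) (hq : q.Prime) (hpodd : Odd p) (hqodd : Odd q)
    (hne : p ≠ q) (hgcd : Nat.gcd (p - 1) (q - 1) = 2)
    (hordp : orderOf (2 : ZMod p) = p - 1) (hordq : orderOf (2 : ZMod q) = q - 1)
    (hdiv : 2 ∣ (p - 1) * (q - 1) / 4)
    (he : 0 < e) (hegcd : Nat.gcd e ((p - 1) * (q - 1)) = 1)
    (F : Type) [Field F] [Fintype F] (hF : Fintype.card F = 2 ^ e) :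
    ∃ g gstar : F[X],
      Irreducible g ∧ Irreducible gstar ∧ g ≠ gstar ∧
      Polynomial.cyclotomic (p * q) F = g * gstar ∧
      g.natDegree = (p - 1) * (q - 1) / 2 ∧ gstar.natDegree = (p - 1) * (q - 1) / 2 ∧
      (∀ (L : Type) [Field L] [Algebra F L] (α : L),
        Polynomial.aeval α g = 0 → Polynomial.aeval α⁻¹ gstar = 0) := by
  classical
  have hp2 := hp.two_le
  have hq2 := hq.two_le
  have hpo := Nat.odd_iff.1 hpodd
  have hqo := Nat.odd_iff.1 hqodd
  have hn0 : 0 < p * q := by positivity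
  have hno : (p * q) % 2 = 1 := Nat.odd_iff.1 (hpodd.mul hqodd)
  have hcop : p.Coprime q := (Nat.coprime_primes hp hq).2 hne
  set d := (p - 1) * (q - 1) / 2 with hd
  have hdd : 2 * d = (p - 1) * (q - 1) := by
    obtain ⟨a, ha⟩ : 2 ∣ (p - 1) := by omega
    have hb : (p - 1) * (q - 1) = 2 * (a * (q - 1)) := by rw [ha]; ring
    omega
  have hd0 : 0 < d := by
    have h4 : 2 * 2 ≤ (p - 1) * (q - 1) := Nat.mul_le_mul (by omega) (by omega)
    omega
  -- characteristic 2
  have hchar2 : CharP F 2 := by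
    haveI : CharP F (ringChar F) := ringChar.charP F
    obtain ⟨m, hcp, hcard2⟩ := FiniteField.card F (ringChar F)
    have hdvd : ringChar F ∣ 2 ^ e := by
      rw [← hF, hcard2]
      exact dvd_pow_self (ringChar F) (by positivity)
    have : ringChar F = 2 :=
      (Nat.prime_dvd_prime_iff_eq hcp Nat.prime_two).1 (hcp.dvd_of_dvd_pow hdvd)
    rwa [this] at ‹CharP F (ringChar F)›
  haveI := hchar2
  -- the cyclotomic field
  set npos : ℕ+ := ⟨p * q, hn0⟩ with hnpos
  haveI : NeZero (((npos : ℕ) : F)) :=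
    ⟨fun h => (by omega : ¬ (2 ∣ p * q)) ((CharP.cast_eq_zero_iff F 2 (p * q)).1 h)⟩
  set K := CyclotomicField npos F with hK
  haveI : CharP K 2 := charP_of_injective_algebraMap (algebraMap F K).injective 2
  obtain ⟨ζ, hζ0⟩ :=
    (CyclotomicField.isCyclotomicExtension npos F).exists_isPrimitiveRoot (Set.mem_singleton _) hn0.ne'
  have hζ : IsPrimitiveRoot ζ (p * q) := hζ0
  have hζinv : IsPrimitiveRoot ζ⁻¹ (p * q) := hζ.inv
  -- number theory facts
  obtain ⟨hQd, hinj, hneg1⟩ := nt_facts hp hq hpodd hqodd hne hgcd hordp hordq hdiv hegcd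
  have hQd' : ((Fintype.card F : ZMod (p * q))) ^ d = 1 := by rw [hF]; push_cast at hQd ⊢; exact hQd
  have hinj' : ∀ i < d, ∀ j < d,
      ((Fintype.card F : ZMod (p * q))) ^ i = (Fintype.card F : ZMod (p * q)) ^ j → i = j := by
    rw [hF]; push_cast at hinj ⊢; exact hinj
  obtain ⟨hdeg_g, hmap_g⟩ := minpoly_primroot hF hn0 hd0 hζ hQd' hinj'
  obtain ⟨hdeg_gs, hmap_gs⟩ := minpoly_primroot hF hn0 hd0 hζinv hQd' hinj'
  set g := minpoly F ζ with hg
  set gstar := minpoly F ζ⁻¹ with hgs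
  -- integrality and irreducibility
  have hintf : ∀ x : K, x ^ (p * q) = 1 → IsIntegral F x := by
    intro x hx
    refine ⟨X ^ (p * q) - C 1, Polynomial.monic_X_pow_sub_C 1 hn0.ne', ?_⟩
    simp [Polynomial.eval₂_sub, hx]
  have hint_z : IsIntegral F ζ := hintf ζ hζ.pow_eq_one
  have hint_zi : IsIntegral F ζ⁻¹ := hintf ζ⁻¹ hζinv.pow_eq_one
  have hirr_g : Irreducible g := minpoly.irreducible hint_z
  have hirr_gs : Irreducible gstar := minpoly.irreducible hint_zi
  have hmon_g : g.Monic := minpoly.monic hint_z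
  have hmon_gs : gstar.Monic := minpoly.monic hint_zi
  -- both divide the cyclotomic polynomial
  have hdvd_g : g ∣ Polynomial.cyclotomic (p * q) F := by
    apply minpoly.dvd
    rw [Polynomial.aeval_def, ← Polynomial.eval_map, Polynomial.map_cyclotomic]
    exact hζ.isRoot_cyclotomic hn0
  have hdvd_gs : gstar ∣ Polynomial.cyclotomic (p * q) F := by
    apply minpoly.dvd
    rw [Polynomial.aeval_def, ← Polynomial.eval_map, Polynomial.map_cyclotomic]
    exact hζinv.isRoot_cyclotomic hn0
  -- distinctness
  have hne_g : g ≠ gstar := by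
    intro heq
    have h0 : Polynomial.eval ζ⁻¹ (g.map (algebraMap F K)) = 0 := by
      rw [Polynomial.eval_map, ← Polynomial.aeval_def, heq]
      exact minpoly.aeval F ζ⁻¹
    rw [hmap_g, Polynomial.eval_prod] at h0
    obtain ⟨i, hi, hieq⟩ := Finset.prod_eq_zero_iff.1 h0
    rw [Polynomial.eval_sub, Polynomial.eval_X, Polynomial.eval_C, sub_eq_zero] at hieq
    -- ζ⁻¹ = ζ ^ (card F) ^ i
    have hζne : ζ ≠ 0 := by
      intro h
      rw [h] at hζ
      exact hζ.ne_zero hn0.ne' rfl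
    have hone : ζ ^ ((Fintype.card F) ^ i + 1) = 1 := by
      rw [pow_succ, ← hieq, inv_mul_cancel₀ hζne]
    have hdvd : (p * q) ∣ (Fintype.card F) ^ i + 1 := (hζ.pow_eq_one_iff_dvd _).1 hone
    have hz : (((Fintype.card F) ^ i + 1 : ℕ) : ZMod (p * q)) = 0 :=
      (ZMod.natCast_eq_zero_iff _ _).2 hdvd
    push_cast [hF] at hz
    exact hneg1 i (by push_cast; linear_combination hz)
  -- the product identity
  have hcop_poly : IsCoprime g gstar := by
    rw [hirr_g.coprime_iff_not_dvd]
    intro hdvd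
    exact hne_g (monic_eq_of_dvd hmon_gs hmon_g hdvd (by rw [hdeg_g, hdeg_gs])).symm
  have hgne0 : g ≠ 0 := hmon_g.ne_zero
  have hgsne0 : gstar ≠ 0 := hmon_gs.ne_zero
  have hcyc : Polynomial.cyclotomic (p * q) F = g * gstar := by
    apply monic_eq_of_dvd (Polynomial.cyclotomic.monic _ F) (hmon_g.mul hmon_gs)
      (hcop_poly.mul_dvd hdvd_g hdvd_gs)
    rw [Polynomial.natDegree_cyclotomic, Nat.totient_mul hcop,
      Nat.totient_prime hp, Nat.totient_prime hq,
      Polynomial.natDegree_mul hgne0 hgsne0, hdeg_g, hdeg_gs]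
    omega
  refine ⟨g, gstar, hirr_g, hirr_gs, hne_g, hcyc, hdeg_g, hdeg_gs, ?_⟩
  -- the reciprocal-root property
  intro L _ _ α hα
  haveI : Fact (Irreducible g) := ⟨hirr_g⟩
  set ψ : AdjoinRoot g →ₐ[F] K := AdjoinRoot.liftAlgHom g (Algebra.ofId F K) ζ
    (by rw [Algebra.toRingHom_ofId, ← Polynomial.aeval_def]; exact minpoly.aeval F ζ) with hψ
  have hψinj : Function.Injective ψ := ψ.toRingHom.injective
  have hroot0 : Polynomial.aeval ((AdjoinRoot.root g)⁻¹) gstar = 0 := by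
    apply hψinj
    rw [map_zero, ← Polynomial.aeval_algHom_apply, map_inv₀, hψ, AdjoinRoot.liftAlgHom_root]
    exact minpoly.aeval F ζ⁻¹
  set φ : AdjoinRoot g →ₐ[F] L := AdjoinRoot.liftAlgHom g (Algebra.ofId F L) α
    (by rw [Algebra.toRingHom_ofId, ← Polynomial.aeval_def]; exact hα) with hφ
  have : Polynomial.aeval (φ ((AdjoinRoot.root g)⁻¹)) gstar = 0 := by
    rw [Polynomial.aeval_algHom_apply, hroot0, map_zero]
  rwa [map_inv₀, hφ, AdjoinRoot.liftAlgHom_root] at this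
end

section
/- Let p, q, e be as above and let c(x) ∈ GF(2^e)[x] be a polynomial such that c(α^{-1}) = c(α) for every primitive pq-th root of unity α. Then gcd(c(x), Q_{pq}(x)) ≠ 1 if and only if Q_{pq}(x) divides c(x). -/
open Polynomial Finset

lemma keyNT (p q e : ℕ) (hp : p.Prime) (hq : q.Prime) (hpodd : Odd p) (hqodd : Odd q)
    (hne : p ≠ q) (hgcd : Nat.gcd (p - 1) (q - 1) = 2)
    (hordp : orderOf (2 : ZMod p) = p - 1) (hordq : orderOf (2 : ZMod q) = q - 1)
    (hdiv : 2 ∣ (p - 1) * (q - 1) / 4)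
    (hegcd : Nat.gcd e ((p - 1) * (q - 1)) = 1)
    (u : (ZMod (p * q))ˣ) :
    ∃ k : ℕ, ((u : ZMod (p * q)) = 2 ^ (e * k)) ∨ ((u : ZMod (p * q)) = - 2 ^ (e * k)) := by
  classical
  haveI : Fact p.Prime := ⟨hp⟩
  haveI : Fact q.Prime := ⟨hq⟩
  have hp3 : 3 ≤ p := by
    have := hp.two_le; have := Nat.odd_iff.mp hpodd; omega
  have hq3 : 3 ≤ q := by
    have := hq.two_le; have := Nat.odd_iff.mp hqodd; omega
  haveI : NeZero (p * q) := ⟨by positivity⟩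
  have hNodd : Odd (p * q) := hpodd.mul hqodd
  have h2cop : Nat.Coprime 2 (p * q) := Nat.coprime_two_left.mpr hNodd
  set T : (ZMod (p * q))ˣ := ZMod.unitOfCoprime 2 h2cop with hTdef
  have hT : (T : ZMod (p * q)) = 2 := by
    have := ZMod.coe_unitOfCoprime 2 h2cop
    rw [this]; push_cast; ring
  have hpq : Nat.Coprime p q := (Nat.coprime_primes hp hq).mpr hne
  -- order of 2 mod pq
  have horder2 : orderOf (2 : ZMod (p * q)) = Nat.lcm (p - 1) (q - 1) := by
    have h1 := (ZMod.chineseRemainder hpq).toMulEquiv.orderOf_eq (2 : ZMod (p * q))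
    have h2 : (ZMod.chineseRemainder hpq) (2 : ZMod (p * q)) = ((2 : ZMod p), (2 : ZMod q)) := by
      have h3 : (2 : ZMod (p * q)) = ((2 : ℕ) : ZMod (p * q)) := by push_cast; ring
      rw [h3, map_natCast]
      ext <;> simp
    rw [← h1]
    have h2' : (ZMod.chineseRemainder hpq).toMulEquiv (2 : ZMod (p * q)) = ((2 : ZMod p), (2 : ZMod q)) := h2
    rw [h2', Prod.orderOf_mk, hordp, hordq]
  have horderT : orderOf T = Nat.lcm (p - 1) (q - 1) := by
    rw [← horder2, ← hT, orderOf_units]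
  have hlcmdvd : Nat.lcm (p - 1) (q - 1) ∣ (p - 1) * (q - 1) := Nat.lcm_dvd_mul _ _
  have hcopeT : Nat.Coprime e (orderOf T) := by
    rw [horderT]; exact Nat.Coprime.coprime_dvd_right hlcmdvd hegcd
  set S : (ZMod (p * q))ˣ := T ^ e with hSdef
  have horderS : orderOf S = orderOf T := by
    rw [hSdef, orderOf_pow, Nat.Coprime.gcd_eq_one hcopeT.symm, Nat.div_one]
  set H : Subgroup (ZMod (p * q))ˣ := Subgroup.zpowers S with hHdef
  have hcardG : Nat.card (ZMod (p * q))ˣ = (p - 1) * (q - 1) := by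
    rw [Nat.card_eq_fintype_card, ZMod.card_units_eq_totient, Nat.totient_mul hpq,
      Nat.totient_prime hp, Nat.totient_prime hq]
  have hcardH : Nat.card H = Nat.lcm (p - 1) (q - 1) := by
    rw [hHdef, Nat.card_zpowers, horderS, horderT]
  have hlcmpos : 0 < Nat.lcm (p - 1) (q - 1) := Nat.lcm_pos (by omega) (by omega)
  have hgl := Nat.gcd_mul_lcm (p - 1) (q - 1)
  rw [hgcd] at hgl
  have hindex : H.index = 2 := by
    have h := Subgroup.card_mul_index H
    rw [hcardH, hcardG, ← hgl] at h
    have h' : Nat.lcm (p - 1) (q - 1) * H.index = Nat.lcm (p - 1) (q - 1) * 2 := by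
      rw [h]; ring
    exact Nat.eq_of_mul_eq_mul_left hlcmpos h'
  -- parity data
  obtain ⟨m, hm⟩ := hpodd
  obtain ⟨n, hn⟩ := hqodd
  have hm1 : p - 1 = 2 * m := by omega
  have hn1 : q - 1 = 2 * n := by omega
  have hmn1 : Nat.gcd m n = 1 := by
    rw [hm1, hn1, Nat.gcd_mul_left] at hgcd; omega
  have hmn2 : 2 ∣ m * n := by
    rw [hm1, hn1] at hdiv
    have : 2 * m * (2 * n) = 4 * (m * n) := by ring
    rw [this, Nat.mul_div_cancel_left _ (by norm_num : 0 < 4)] at hdiv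
    exact hdiv
  -- -1 not in H
  have hneg : (-1 : (ZMod (p * q))ˣ) ∉ H := by
    intro hmem
    have hsub : H ≤ Subgroup.zpowers T :=
      Subgroup.zpowers_le.mpr (Subgroup.pow_mem _ (Subgroup.mem_zpowers T) e)
    obtain ⟨k, hk⟩ := mem_powers_iff_mem_zpowers.mpr (hsub hmem)
    have hk' : (2 : ZMod (p * q)) ^ k = -1 := by
      have := congrArg Units.val hk
      rw [Units.val_pow_eq_pow_val, hT] at this
      simpa using this
    have hkp : (2 : ZMod p) ^ k = -1 := by
      have h := congrArg (ZMod.castHom (dvd_mul_right p q) (ZMod p)) hk'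
      rw [map_pow, map_neg, map_one, map_ofNat] at h
      exact h
    have hkq : (2 : ZMod q) ^ k = -1 := by
      have h := congrArg (ZMod.castHom (dvd_mul_left q p) (ZMod q)) hk'
      rw [map_pow, map_neg, map_one, map_ofNat] at h
      exact h
    have hdvd2k_p : (p - 1) ∣ 2 * k := by
      rw [← hordp]
      apply orderOf_dvd_of_pow_eq_one
      rw [mul_comm, pow_mul, hkp]; ring
    have hdvd2k_q : (q - 1) ∣ 2 * k := by
      rw [← hordq]
      apply orderOf_dvd_of_pow_eq_one
      rw [mul_comm, pow_mul, hkq]; ring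
    have hndvd_p : ¬ (p - 1) ∣ k := by
      intro hd
      rw [← hordp, orderOf_dvd_iff_pow_eq_one] at hd
      rw [hkp] at hd
      have h20 : (2 : ZMod p) = 0 := by linear_combination -hd
      have : ((2 : ℕ) : ZMod p) = 0 := by push_cast; exact h20
      rw [ZMod.natCast_eq_zero_iff] at this
      have := Nat.le_of_dvd (by norm_num) this
      omega
    have hndvd_q : ¬ (q - 1) ∣ k := by
      intro hd
      rw [← hordq, orderOf_dvd_iff_pow_eq_one] at hd
      rw [hkq] at hd
      have h20 : (2 : ZMod q) = 0 := by linear_combination -hd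
      have : ((2 : ℕ) : ZMod q) = 0 := by push_cast; exact h20
      rw [ZMod.natCast_eq_zero_iff] at this
      have := Nat.le_of_dvd (by norm_num) this
      omega
    rw [hm1] at hdvd2k_p hndvd_p
    rw [hn1] at hdvd2k_q hndvd_q
    have hmk : m ∣ k := (mul_dvd_mul_iff_left (by norm_num : (2:ℕ) ≠ 0)).mp hdvd2k_p
    have hnk : n ∣ k := (mul_dvd_mul_iff_left (by norm_num : (2:ℕ) ≠ 0)).mp hdvd2k_q
    obtain ⟨s, hs⟩ := hmk
    obtain ⟨t, ht⟩ := hnk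
    have hsodd : ¬ 2 ∣ s := by
      intro ⟨s', hs'⟩
      exact hndvd_p ⟨s', by rw [hs, hs']; ring⟩
    have htodd : ¬ 2 ∣ t := by
      intro ⟨t', ht'⟩
      exact hndvd_q ⟨t', by rw [ht, ht']; ring⟩
    rcases (Nat.prime_two.dvd_mul).mp hmn2 with h2m | h2n
    · have h2n' : ¬ 2 ∣ n := by
        intro h2n
        have : (2:ℕ) ∣ Nat.gcd m n := Nat.dvd_gcd h2m h2n
        omega
      have hkeven : 2 ∣ k := hs ▸ Dvd.dvd.mul_right h2m s
      have hkodd : ¬ 2 ∣ k := by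
        rw [ht]; intro hd
        rcases (Nat.prime_two.dvd_mul).mp hd with h | h
        · exact h2n' h
        · exact htodd h
      exact hkodd hkeven
    · have h2m' : ¬ 2 ∣ m := by
        intro h2m
        have : (2:ℕ) ∣ Nat.gcd m n := Nat.dvd_gcd h2m h2n
        omega
      have hkeven : 2 ∣ k := ht ▸ Dvd.dvd.mul_right h2n t
      have hkodd : ¬ 2 ∣ k := by
        rw [hs]; intro hd
        rcases (Nat.prime_two.dvd_mul).mp hd with h | h
        · exact h2m' h
        · exact hsodd h
      exact hkodd hkeven
  -- conclude
  have hSval : ∀ k : ℕ, ((S ^ k : (ZMod (p*q))ˣ) : ZMod (p * q)) = 2 ^ (e * k) := by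
    intro k
    rw [hSdef, ← pow_mul, Units.val_pow_eq_pow_val, hT]
  by_cases hu : u ∈ H
  · obtain ⟨k, hk⟩ := mem_powers_iff_mem_zpowers.mpr hu
    exact ⟨k, Or.inl (by rw [← hk, hSval])⟩
  · have h2 : (-1) * u ∈ H :=
      (Subgroup.mul_mem_iff_of_index_two hindex).mpr (iff_of_false hneg hu)
    obtain ⟨k, hk⟩ := mem_powers_iff_mem_zpowers.mpr h2
    refine ⟨k, Or.inr ?_⟩
    have := congrArg Units.val hk
    rw [hSval, neg_one_mul, Units.val_neg] at this
    linear_combination this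
theorem stmt9 (p q e : ℕ) (hp : p.Prime) (hq : q.Prime) (hpodd : Odd p) (hqodd : Odd q)
    (hne : p ≠ q) (hgcd : Nat.gcd (p - 1) (q - 1) = 2)
    (hordp : orderOf (2 : ZMod p) = p - 1) (hordq : orderOf (2 : ZMod q) = q - 1)
    (hdiv : 2 ∣ (p - 1) * (q - 1) / 4)
    (he : 0 < e) (hegcd : Nat.gcd e ((p - 1) * (q - 1)) = 1)
    (F : Type) [Field F] [Fintype F] (hF : Fintype.card F = 2 ^ e)
    (c : F[X])
    (hc : ∀ (L : Type) [Field L] [Algebra F L] (α : L),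
      Polynomial.aeval α (Polynomial.cyclotomic (p * q) F) = 0 →
      Polynomial.aeval α c = Polynomial.aeval α⁻¹ c) :
    ¬ IsCoprime c (Polynomial.cyclotomic (p * q) F) ↔
      Polynomial.cyclotomic (p * q) F ∣ c := by
  classical
  have hppos := hp.pos
  have hqpos := hq.pos
  have Npos : 0 < p * q := Nat.mul_pos hppos hqpos
  haveI : NeZero (p * q) := ⟨Npos.ne'⟩
  have hNodd : Odd (p * q) := hpodd.mul hqodd
  -- characteristic of F is 2
  haveI hchar : CharP F 2 := by
    haveI := ringChar.charP F
    have hrprime : (ringChar F).Prime := CharP.char_is_prime F (ringChar F)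
    have hdvdcard : (ringChar F) ∣ Fintype.card F := by
      rw [← CharP.cast_eq_zero_iff F (ringChar F) (Fintype.card F)]
      exact FiniteField.cast_card_eq_zero F
    rw [hF] at hdvdcard
    have : ringChar F = 2 :=
      (Nat.prime_dvd_prime_iff_eq hrprime Nat.prime_two).mp (hrprime.dvd_of_dvd_pow hdvdcard)
    rwa [← this]
  set L := AlgebraicClosure F with hLdef
  haveI : CharP L 2 := by infer_instance
  haveI : NeZero ((p * q : ℕ) : L) := by
    refine ⟨fun h => ?_⟩
    rw [CharP.cast_eq_zero_iff L 2] at h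
    have := Nat.odd_iff.mp hNodd
    omega
  constructor
  · intro hnc
    by_cases hc0 : c = 0
    · simp [hc0]
    set Φ := Polynomial.cyclotomic (p * q) F with hΦdef
    set d := EuclideanDomain.gcd c Φ with hddef
    have hdu : ¬ IsUnit d := fun h => hnc (EuclideanDomain.gcd_isUnit_iff.mp h)
    have hd0 : d ≠ 0 := by
      intro h
      rw [hddef] at h
      exact hc0 (EuclideanDomain.gcd_eq_zero_iff.mp h).1
    have hdeg : (d.map (algebraMap F L)).degree ≠ 0 := by
      rw [Polynomial.degree_map_eq_of_injective (algebraMap F L).injective]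
      intro h
      exact hdu (Polynomial.isUnit_iff_degree_eq_zero.mpr h)
    obtain ⟨α, hαroot⟩ := IsAlgClosed.exists_root _ hdeg
    have hαd : Polynomial.aeval α d = 0 := by
      rw [Polynomial.aeval_def, ← Polynomial.eval_map]
      exact hαroot
    have hαc : Polynomial.aeval α c = 0 := by
      obtain ⟨r, hr⟩ := EuclideanDomain.gcd_dvd_left c Φ
      rw [hr, map_mul, hαd, zero_mul]
    have hαΦ : Polynomial.aeval α Φ = 0 := by
      obtain ⟨r, hr⟩ := EuclideanDomain.gcd_dvd_right c Φ
      rw [hr, map_mul, hαd, zero_mul]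
    have hαprim : IsPrimitiveRoot α (p * q) := by
      rw [← Polynomial.isRoot_cyclotomic_iff (R := L) (n := p * q)]
      rw [hΦdef, Polynomial.aeval_def, ← Polynomial.eval_map, Polynomial.map_cyclotomic] at hαΦ
      exact hαΦ
    -- Frobenius-orbit vanishing
    haveI : ExpChar L 2 := by infer_instance
    have hfrob : ∀ k : ℕ, Polynomial.aeval (α ^ 2 ^ (e * k)) c = 0 := by
      intro k
      let ψ : L →ₐ[F] L :=
        { toRingHom := iterateFrobenius L 2 (e * k)
          commutes' := fun a => by
            show (algebraMap F L a) ^ 2 ^ (e * k) = algebraMap F L a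
            rw [← map_pow]
            congr 1
            rw [pow_mul, ← hF]
            exact FiniteField.pow_card_pow k a }
      have h1 := Polynomial.aeval_algHom_apply ψ α c
      have h2 : ψ α = α ^ 2 ^ (e * k) := rfl
      rw [h2] at h1
      rw [h1, hαc, map_zero]
    -- all primitive roots are roots of c
    have hinv : ∀ β : L, IsPrimitiveRoot β (p * q) → Polynomial.aeval β c = 0 := by
      intro β hβ
      obtain ⟨i, hiN, hαi⟩ := hαprim.eq_pow_of_pow_eq_one hβ.pow_eq_one
      have hicop : i.Coprime (p * q) := (hαprim.pow_iff_coprime Npos i).mp (hαi ▸ hβ)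
      have horda : orderOf α = p * q := hαprim.eq_orderOf.symm
      obtain ⟨k, hk | hk⟩ :=
        keyNT p q e hp hq hpodd hqodd hne hgcd hordp hordq hdiv hegcd
          (ZMod.unitOfCoprime i hicop)
      · rw [ZMod.coe_unitOfCoprime] at hk
        have hmod : (i : ZMod (p * q)) = ((2 ^ (e * k) : ℕ) : ZMod (p * q)) := by
          push_cast; exact hk
        have hModEq : i ≡ 2 ^ (e * k) [MOD p * q] :=
          (ZMod.natCast_eq_natCast_iff _ _ _).mp hmod
        have hβeq : β = α ^ 2 ^ (e * k) := by
          rw [← hαi]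
          calc α ^ i = α ^ (i % orderOf α) := (pow_mod_orderOf α i).symm
            _ = α ^ (2 ^ (e * k) % orderOf α) := by rw [horda]; exact congrArg (α ^ ·) hModEq
            _ = α ^ 2 ^ (e * k) := (pow_mod_orderOf α _)
        rw [hβeq]; exact hfrob k
      · rw [ZMod.coe_unitOfCoprime] at hk
        have hzero : ((i + 2 ^ (e * k) : ℕ) : ZMod (p * q)) = 0 := by
          push_cast
          rw [hk]; ring
        have hdvdN : (p * q) ∣ i + 2 ^ (e * k) :=
          (ZMod.natCast_eq_zero_iff _ _).mp hzero
        have hmul : β * α ^ 2 ^ (e * k) = 1 := by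
          rw [← hαi, ← pow_add]
          have h5 : orderOf α ∣ i + 2 ^ (e * k) := by rw [horda]; exact hdvdN
          exact orderOf_dvd_iff_pow_eq_one.mp h5
        have hβinv : β⁻¹ = α ^ 2 ^ (e * k) := inv_eq_of_mul_eq_one_right hmul
        have hcyclβ : Polynomial.aeval β (Polynomial.cyclotomic (p * q) F) = 0 := by
          rw [Polynomial.aeval_def, ← Polynomial.eval_map, Polynomial.map_cyclotomic]
          exact (Polynomial.isRoot_cyclotomic_iff).mpr hβ
        rw [hc L β hcyclβ, hβinv]
        exact hfrob k
    -- conclude divisibility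
    have hmapdvd : Φ.map (algebraMap F L) ∣ c.map (algebraMap F L) := by
      rw [hΦdef, Polynomial.map_cyclotomic,
        Polynomial.cyclotomic_eq_prod_X_sub_primitiveRoots hαprim,
        Finset.prod_eq_multiset_prod]
      refine dvd_trans (Multiset.prod_dvd_prod_of_le (Multiset.map_le_map ?_))
        (Polynomial.prod_multiset_X_sub_C_dvd (c.map (algebraMap F L)))
      rw [Multiset.le_iff_count]
      intro a
      by_cases ha : a ∈ primitiveRoots (p * q) L
      · have hcount1 : Multiset.count a (primitiveRoots (p * q) L).val = 1 :=
          Multiset.count_eq_one_of_mem (primitiveRoots (p * q) L).nodup ha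
        rw [hcount1]
        rw [Multiset.one_le_count_iff_mem]
        rw [Polynomial.mem_roots']
        refine ⟨by rwa [Polynomial.map_ne_zero_iff (algebraMap F L).injective], ?_⟩
        have := hinv a ((mem_primitiveRoots Npos).mp ha)
        rwa [Polynomial.aeval_def, ← Polynomial.eval_map] at this
      · rw [Multiset.count_eq_zero_of_notMem ha]
        exact Nat.zero_le _
    exact (Polynomial.map_dvd_map' (algebraMap F L)).mp hmapdvd
  · intro hdvd hco
    have hunit : IsUnit (Polynomial.cyclotomic (p * q) F) := hco.isUnit_of_dvd' hdvd dvd_rfl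
    have h0 := Polynomial.natDegree_eq_zero_of_isUnit hunit
    rw [Polynomial.natDegree_cyclotomic] at h0
    have := Nat.totient_pos.mpr Npos
    omega
end

section
/- Let m be even, n = em, and let f(x) = Σ_{i=1}^{m/2 - 1} Tr^n_1(c_i x^{1+2^{ei}}) + Tr^{n/2}_1(c_{m/2} x^{1+2^{n/2}}) with c_i ∈ GF(2^e). Then f is bent if and only if gcd(c_f(x), x^m + 1) = 1 in GF(2^e)[x], where c_f(x) = Σ_{i=1}^{m/2-1} c_i (x^i + x^{m-i}) + c_{m/2} x^{m/2}. In particular, if f is bent then c_{m/2} ≠ 0. -/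
open Polynomial Finset
open scoped Classical

noncomputable def trsum {K : Type} [Field K] (d : ℕ) (y : K) : K :=
  ∑ j ∈ Finset.range d, y ^ (2 ^ j)

noncomputable def chi {K : Type} [Field K] (z : K) : ℤ := if z = 0 then 1 else -1

section Basics
variable {K : Type} [Field K]

lemma bit_cases {z : K} (h : z ^ 2 = z) : z = 0 ∨ z = 1 := by
  have h2 : z * (z - 1) = 0 := by linear_combination h
  rcases mul_eq_zero.mp h2 with h1 | h1
  · exact Or.inl h1
  · exact Or.inr (by linear_combination h1)

lemma chi_zero : chi (0 : K) = 1 := by simp [chi]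

lemma chi_one : chi (1 : K) = -1 := by simp [chi]

variable [CharP K 2]

lemma two_zero : (2 : K) = 0 := by
  have := CharP.cast_eq_zero K 2; simpa using this

lemma chi_add {a b : K} (ha : a ^ 2 = a) (hb : b ^ 2 = b) :
    chi (a + b) = chi a * chi b := by
  rcases bit_cases ha with h | h <;> rcases bit_cases hb with h' | h' <;>
    subst h <;> subst h' <;> simp [chi, CharTwo.add_self_eq_zero]

lemma chi_add_one {a : K} (ha : a ^ 2 = a) : chi (a + 1) = -chi a := by
  rcases bit_cases ha with h | h <;> subst h <;>
    simp [chi, CharTwo.add_self_eq_zero]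

lemma bit_add {a b : K} (ha : a ^ 2 = a) (hb : b ^ 2 = b) : (a + b) ^ 2 = a + b := by
  rw [add_sq, ha, hb, two_zero]; ring

lemma bit_sum {ι : Type*} (s : Finset ι) (f : ι → K) (h : ∀ i ∈ s, f i ^ 2 = f i) :
    (∑ i ∈ s, f i) ^ 2 = ∑ i ∈ s, f i := by
  classical
  induction s using Finset.induction_on with
  | empty => simp
  | @insert a s' hx ih =>
    rw [Finset.sum_insert hx]
    exact bit_add (h a (Finset.mem_insert_self a s'))
      (ih fun i hi => h i (Finset.mem_insert_of_mem hi))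

lemma trsum_add_arg (d : ℕ) (a b : K) : trsum d (a + b) = trsum d a + trsum d b := by
  haveI : Fact (Nat.Prime 2) := ⟨Nat.prime_two⟩
  unfold trsum
  rw [← Finset.sum_add_distrib]
  exact Finset.sum_congr rfl fun j _ => add_pow_char_pow a b 2 j

omit [CharP K 2] in
lemma trsum_zero_arg (d : ℕ) : trsum d (0 : K) = 0 := by
  unfold trsum
  refine Finset.sum_eq_zero fun j _ => ?_
  exact zero_pow (by positivity)

lemma trsum_sum {ι : Type*} (d : ℕ) (s : Finset ι) (f : ι → K) :
    trsum d (∑ i ∈ s, f i) = ∑ i ∈ s, trsum d (f i) := by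
  classical
  induction s using Finset.induction_on with
  | empty => simp [trsum_zero_arg]
  | @insert a s' hx ih =>
    rw [Finset.sum_insert hx, Finset.sum_insert hx, trsum_add_arg, ih]

lemma trsum_arg_sq (d : ℕ) (y : K) : trsum d (y ^ 2) = (trsum d y) ^ 2 := by
  haveI : Fact (Nat.Prime 2) := ⟨Nat.prime_two⟩
  unfold trsum
  rw [sum_pow_char]
  exact Finset.sum_congr rfl fun j _ => by
    rw [← pow_mul, ← pow_mul, mul_comm]

lemma trsum_sq (d : ℕ) (y : K) : (trsum d y) ^ 2 = trsum d y + y + y ^ 2 ^ d := by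
  haveI : Fact (Nat.Prime 2) := ⟨Nat.prime_two⟩
  unfold trsum
  rw [sum_pow_char]
  have h1 : ∀ j, (y ^ 2 ^ j) ^ 2 = y ^ 2 ^ (j + 1) := fun j => by
    rw [← pow_mul, pow_succ]
  have h2 : ∑ j ∈ Finset.range (d + 1), y ^ 2 ^ j
      = (∑ j ∈ Finset.range d, y ^ 2 ^ (j + 1)) + y := by
    rw [Finset.sum_range_succ']; norm_num
  calc (∑ j ∈ Finset.range d, (y ^ 2 ^ j) ^ 2)
      = ∑ j ∈ Finset.range d, y ^ 2 ^ (j + 1) := Finset.sum_congr rfl fun j _ => h1 j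
    _ = (∑ j ∈ Finset.range (d+1), y ^ 2 ^ j) - y := by rw [h2]; ring
    _ = (∑ j ∈ Finset.range d, y ^ 2 ^ j) + y ^ 2 ^ d - y := by rw [Finset.sum_range_succ]
    _ = _ := by rw [CharTwo.sub_eq_add]; ring

omit [CharP K 2] in
lemma trsum_split (a b : ℕ) (y : K) :
    trsum (a + b) y = trsum a y + trsum b (y ^ 2 ^ a) := by
  unfold trsum
  rw [Finset.sum_range_add]
  congr 1
  exact Finset.sum_congr rfl fun j _ => by rw [← pow_mul, ← pow_add]

end Basics

section Lpoly
variable {K : Type} [Field K]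

/-- fixed under x ↦ x^(2^e) implies fixed under x ↦ x^(2^(e*t)) -/
lemma fix_iter {a : K} {e : ℕ} (h : a ^ 2 ^ e = a) (t : ℕ) : a ^ 2 ^ (e * t) = a := by
  induction t with
  | zero => simp
  | succ t ih =>
    have : 2 ^ (e * (t + 1)) = 2 ^ (e * t) * 2 ^ e := by rw [← pow_add]; ring_nf
    rw [this, pow_mul, ih, h]

/-- the linearized polynomial map associated to p -/
noncomputable def lpoly (e : ℕ) (p : K[X]) (x : K) : K :=
  ∑ j ∈ Finset.range (p.natDegree + 1), p.coeff j * x ^ 2 ^ (e * j)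

lemma lpoly_eq_of_lt (e : ℕ) (p : K[X]) (x : K) {N : ℕ} (hN : p.natDegree < N) :
    lpoly e p x = ∑ j ∈ Finset.range N, p.coeff j * x ^ 2 ^ (e * j) := by
  unfold lpoly
  apply Finset.sum_subset (Finset.range_subset_range.mpr hN)
  intro j _ hj
  rw [Polynomial.coeff_eq_zero_of_natDegree_lt (by
    simp only [Finset.mem_range, not_lt] at hj
    omega), zero_mul]

lemma lpoly_add (e : ℕ) (p q : K[X]) (x : K) :
    lpoly e (p + q) x = lpoly e p x + lpoly e q x := by
  set N := max ((p+q).natDegree) (max p.natDegree q.natDegree) + 1 with hN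
  rw [lpoly_eq_of_lt e _ x (N := N) (by omega),
      lpoly_eq_of_lt e p x (N := N) (by omega),
      lpoly_eq_of_lt e q x (N := N) (by omega), ← Finset.sum_add_distrib]
  exact Finset.sum_congr rfl fun j _ => by rw [Polynomial.coeff_add]; ring

lemma lpoly_zero (e : ℕ) (x : K) : lpoly e (0 : K[X]) x = 0 := by
  unfold lpoly; simp

lemma lpoly_sum {ι : Type*} (e : ℕ) (s : Finset ι) (f : ι → K[X]) (x : K) :
    lpoly e (∑ i ∈ s, f i) x = ∑ i ∈ s, lpoly e (f i) x := by
  classical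
  induction s using Finset.induction_on with
  | empty => simp [lpoly_zero]
  | @insert a s' hx ih => rw [Finset.sum_insert hx, Finset.sum_insert hx, lpoly_add, ih]

lemma lpoly_monomial (e k : ℕ) (a : K) (x : K) :
    lpoly e (Polynomial.C a * Polynomial.X ^ k) x = a * x ^ 2 ^ (e * k) := by
  by_cases ha : a = 0
  · subst ha; simp [lpoly_zero]
  · rw [lpoly_eq_of_lt e _ x (N := k + 1) (by
      rw [Polynomial.natDegree_C_mul_X_pow k a ha]; omega)]
    rw [Finset.sum_eq_single k]
    · simp [Polynomial.coeff_C_mul, Polynomial.coeff_X_pow]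
    · intro j _ hj
      rw [Polynomial.coeff_C_mul, Polynomial.coeff_X_pow, if_neg hj, mul_zero, zero_mul]
    · intro h; exact absurd (Finset.self_mem_range_succ k) h

lemma lpoly_one (e : ℕ) (x : K) : lpoly e (1 : K[X]) x = x := by
  have := lpoly_monomial e 0 (1 : K) x
  simpa using this

lemma lpoly_at_zero (e : ℕ) (p : K[X]) : lpoly e p 0 = 0 := by
  unfold lpoly
  refine Finset.sum_eq_zero fun j _ => ?_
  rw [zero_pow (by positivity), mul_zero]

variable [CharP K 2]

lemma lpoly_add_arg (e : ℕ) (p : K[X]) (x y : K) :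
    lpoly e p (x + y) = lpoly e p x + lpoly e p y := by
  haveI : Fact (Nat.Prime 2) := ⟨Nat.prime_two⟩
  unfold lpoly
  rw [← Finset.sum_add_distrib]
  exact Finset.sum_congr rfl fun j _ => by rw [add_pow_char_pow x y 2 (e*j)]; ring

/-- composition law: if the coefficients of p are fixed by x ↦ x^(2^e), then
lpoly (u*p) = lpoly u ∘ lpoly p -/
lemma lpoly_mul (e : ℕ) (p u : K[X]) (hp : ∀ j, (p.coeff j) ^ 2 ^ e = p.coeff j) (x : K) :
    lpoly e (u * p) x = lpoly e u (lpoly e p x) := by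
  haveI : Fact (Nat.Prime 2) := ⟨Nat.prime_two⟩
  induction u using Polynomial.induction_on' with
  | add f g hf hg => rw [add_mul, lpoly_add, lpoly_add, hf, hg]
  | monomial k a =>
    rw [← Polynomial.C_mul_X_pow_eq_monomial, lpoly_monomial]
    -- LHS: lpoly e (C a * X^k * p) x
    by_cases hN0 : p = 0
    · subst hN0; simp [lpoly_zero, lpoly_at_zero, zero_pow (show (2:ℕ)^(e*k) ≠ 0 by positivity)]
    have hdeg : (Polynomial.C a * Polynomial.X ^ k * p).natDegree < k + p.natDegree + 1 := by
      calc (Polynomial.C a * Polynomial.X ^ k * p).natDegree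
          ≤ (Polynomial.C a * Polynomial.X ^ k).natDegree + p.natDegree :=
            Polynomial.natDegree_mul_le
        _ ≤ k + p.natDegree := by
            have := Polynomial.natDegree_C_mul_le a (Polynomial.X ^ k)
            have h2 := Polynomial.natDegree_X_pow_le (R := K) k
            omega
        _ < k + p.natDegree + 1 := by omega
    rw [lpoly_eq_of_lt e _ x hdeg]
    have hcoeff : ∀ t, (Polynomial.C a * Polynomial.X ^ k * p).coeff t
        = if k ≤ t then a * p.coeff (t - k) else 0 := by
      intro t
      rw [mul_assoc, Polynomial.coeff_C_mul, mul_comm (Polynomial.X ^ k) p,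
        Polynomial.coeff_mul_X_pow']
      split_ifs <;> simp
    -- RHS: a * (lpoly e p x)^(2^(e*k))
    unfold lpoly
    rw [sum_pow_char_pow]
    rw [Finset.mul_sum]
    have hre : ∀ j, (p.coeff j * x ^ 2 ^ (e * j)) ^ 2 ^ (e * k)
        = p.coeff j * x ^ 2 ^ (e * (j + k)) := by
      intro j
      rw [mul_pow, ← pow_mul, ← pow_add, fix_iter (hp j) k]
      congr 2
      ring
    calc ∑ t ∈ Finset.range (k + p.natDegree + 1),
          (Polynomial.C a * Polynomial.X ^ k * p).coeff t * x ^ 2 ^ (e * t)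
        = ∑ t ∈ Finset.range (k + p.natDegree + 1),
            (if k ≤ t then a * p.coeff (t - k) else 0) * x ^ 2 ^ (e * t) := by
          exact Finset.sum_congr rfl fun t _ => by rw [hcoeff t]
      _ = ∑ j ∈ Finset.range (p.natDegree + 1), a * p.coeff j * x ^ 2 ^ (e * (j + k)) := by
          have hsplit : k + p.natDegree + 1 = k + (p.natDegree + 1) := by omega
          rw [hsplit, Finset.sum_range_add]
          have h0 : ∀ t ∈ Finset.range k,
              (if k ≤ t then a * p.coeff (t - k) else 0) * x ^ 2 ^ (e * t) = 0 := by
            intro t ht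
            rw [if_neg (by simp only [Finset.mem_range] at ht; omega), zero_mul]
          rw [Finset.sum_eq_zero h0, zero_add]
          refine Finset.sum_congr rfl fun j _ => ?_
          rw [if_pos (by omega), show k + j - k = j by omega, Nat.add_comm k j]
      _ = ∑ j ∈ Finset.range (p.natDegree + 1),
            a * (p.coeff j * x ^ 2 ^ (e * j)) ^ 2 ^ (e * k) := by
          exact Finset.sum_congr rfl fun j _ => by rw [hre j]; ring
      _ = _ := by rw [← Finset.mul_sum]

end Lpoly

section PartB
variable {K : Type} [Field K] [CharP K 2]

lemma lpoly_Xpow_add_one (e m : ℕ) (x : K) :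
    lpoly e ((Polynomial.X : K[X]) ^ m + 1) x = x ^ 2 ^ (e * m) + x := by
  have h : ((Polynomial.X : K[X]) ^ m + 1)
      = Polynomial.C 1 * Polynomial.X ^ m + Polynomial.C 1 * Polynomial.X ^ 0 := by
    simp
  rw [h, lpoly_add, lpoly_monomial, lpoly_monomial]
  simp

lemma coeff_Xpow_add_one_fix (e m j : ℕ) :
    (((Polynomial.X : K[X]) ^ m + 1).coeff j) ^ 2 ^ e
      = ((Polynomial.X : K[X]) ^ m + 1).coeff j := by
  have h2e : (2:ℕ) ^ e ≠ 0 := by positivity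
  rw [Polynomial.coeff_add, Polynomial.coeff_X_pow, Polynomial.coeff_one]
  split_ifs <;>
    simp_all [one_add_one_eq_two, two_zero, zero_pow h2e]

theorem ker_lpoly_iff_coprime (e m : ℕ) (he : 0 < e) (hm : 0 < m)
    [Fintype K] (hK : Fintype.card K = 2 ^ (e * m))
    (p : K[X]) (hp : ∀ j, (p.coeff j) ^ 2 ^ e = p.coeff j) :
    (∀ x : K, lpoly e p x = 0 → x = 0) ↔
      IsCoprime p ((Polynomial.X : K[X]) ^ m + 1) := by
  haveI : Fact (Nat.Prime 2) := ⟨Nat.prime_two⟩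
  have hcard : ∀ x : K, x ^ 2 ^ (e * m) = x := fun x => by
    rw [← hK]; exact FiniteField.pow_card x
  have hq'monic : ((Polynomial.X : K[X]) ^ m + 1).Monic := by
    have := Polynomial.monic_X_pow_add_C (R := K) (1 : K) hm.ne'
    simpa using this
  have hq'0 : ((Polynomial.X : K[X]) ^ m + 1) ≠ 0 := hq'monic.ne_zero
  have hq'deg : ((Polynomial.X : K[X]) ^ m + 1).natDegree = m := by
    rw [show ((Polynomial.X : K[X]) ^ m + 1) = Polynomial.X ^ m + Polynomial.C 1 by simp]
    exact Polynomial.natDegree_X_pow_add_C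
  constructor
  · -- kernel trivial → coprime
    intro hker
    by_contra hncop
    set q' := ((Polynomial.X : K[X]) ^ m + 1) with hq'
    set d0 := EuclideanDomain.gcd p q' with hd0def
    have hd00 : d0 ≠ 0 := fun h => hq'0 (EuclideanDomain.gcd_eq_zero_iff.mp h).2
    have hdu : ¬IsUnit d0 := fun h => hncop (EuclideanDomain.gcd_isUnit_iff.mp h)
    set d := d0 * Polynomial.C (d0.leadingCoeff)⁻¹ with hddef
    have hdmonic : d.Monic := Polynomial.monic_mul_leadingCoeff_inv hd00
    have hd0 : d ≠ 0 := hdmonic.ne_zero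
    have hd0d : d0 ∣ d := Dvd.intro _ rfl
    have hdd0 : d ∣ d0 := by
      refine ⟨Polynomial.C d0.leadingCoeff, ?_⟩
      rw [hddef, mul_assoc, ← Polynomial.C_mul,
        inv_mul_cancel₀ (Polynomial.leadingCoeff_ne_zero.mpr hd00), Polynomial.C_1, mul_one]
    have hdp : d ∣ p := dvd_trans hdd0 (EuclideanDomain.gcd_dvd_left p q')
    have hdq' : d ∣ q' := dvd_trans hdd0 (EuclideanDomain.gcd_dvd_right p q')
    have hdnu : ¬IsUnit d := fun h => hdu (isUnit_of_dvd_unit hd0d h)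
    have hddeg : 1 ≤ d.natDegree := by
      by_contra hcon
      push_neg at hcon
      interval_cases hdeg : d.natDegree
      · exact hdnu (hdmonic.natDegree_eq_zero.mp hdeg ▸ isUnit_one)
    -- Frobenius fixedness of d
    set φ : K →+* K := iterateFrobenius K 2 e with hφdef
    have hφ : ∀ x : K, φ x = x ^ 2 ^ e := fun x => iterateFrobenius_def 2 e x
    have hφinj : Function.Injective φ := φ.injective
    have hmapp : p.map φ = p := by
      ext j
      rw [Polynomial.coeff_map, hφ, hp]
    have hmapq' : q'.map φ = q' := by
      ext j
      rw [Polynomial.coeff_map, hφ, coeff_Xpow_add_one_fix]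
    have hφd_dvd : d.map φ ∣ d := by
      have h1 : d.map φ ∣ p := by
        obtain ⟨s, hs⟩ := hdp
        exact ⟨s.map φ, by rw [← hmapp, hs, Polynomial.map_mul]⟩
      have h2 : d.map φ ∣ q' := by
        obtain ⟨s, hs⟩ := hdq'
        exact ⟨s.map φ, by rw [← hmapq', hs, Polynomial.map_mul]⟩
      exact dvd_trans (EuclideanDomain.dvd_gcd h1 h2) hd0d
    have hφdmonic : (d.map φ).Monic := hdmonic.map φ
    have hφddeg : (d.map φ).natDegree = d.natDegree :=
      Polynomial.natDegree_map_eq_of_injective hφinj d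
    have hdfixpoly : d.map φ = d := by
      obtain ⟨k, hk⟩ := hφd_dvd
      have hk0 : k ≠ 0 := by
        intro h; rw [h, mul_zero] at hk; exact hd0 hk
      have hdegk : k.natDegree = 0 := by
        have := Polynomial.natDegree_mul (hφdmonic.ne_zero) hk0
        rw [← hk, hφddeg] at this
        omega
      have hklead : k.leadingCoeff = 1 := by
        have := Polynomial.leadingCoeff_mul (d.map φ) k
        rw [← hk, hdmonic.leadingCoeff, hφdmonic.leadingCoeff, one_mul] at this
        exact this.symm
      have hk1 : k = 1 := by
        have hkm : k.Monic := hklead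
        exact hkm.natDegree_eq_zero.mp hdegk
      rw [hk1, mul_one] at hk
      exact hk.symm
    have hdfix : ∀ j, (d.coeff j) ^ 2 ^ e = d.coeff j := by
      intro j
      conv_rhs => rw [← hdfixpoly]
      rw [Polynomial.coeff_map, hφ]
    -- factorizations
    obtain ⟨s, hs⟩ := hdp
    obtain ⟨t, ht⟩ := hdq'
    have ht0 : t ≠ 0 := by
      intro h; rw [h, mul_zero] at ht; exact hq'0 ht
    have htdeg : d.natDegree + t.natDegree = m := by
      have := Polynomial.natDegree_mul hd0 ht0
      rw [← ht, hq'deg] at this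
      omega
    -- kernel of lpoly e d is trivial, hence lpoly e d injective
    have hkerd : ∀ x : K, lpoly e d x = 0 → x = 0 := by
      intro x hx
      apply hker
      rw [hs, mul_comm, lpoly_mul e d s hdfix, hx, lpoly_at_zero]
    have hinj : Function.Injective (lpoly e d) := by
      intro x y hxy
      have : lpoly e d (x + y) = 0 := by
        rw [lpoly_add_arg, hxy, CharTwo.add_self_eq_zero]
      have hxy0 := hkerd _ this
      rwa [CharTwo.add_eq_iff_eq_add, zero_add] at hxy0
    -- the evaluation polynomial of t
    set D := t.natDegree with hD
    set P : K[X] := ∑ j ∈ Finset.range (D + 1),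
      Polynomial.C (t.coeff j) * Polynomial.X ^ 2 ^ (e * j) with hPdef
    have heval : ∀ y : K, P.eval y = lpoly e t y := by
      intro y
      rw [hPdef, Polynomial.eval_finset_sum]
      unfold lpoly
      exact Finset.sum_congr rfl fun j _ => by simp
    have hexpinj : ∀ j1 j2 : ℕ, 2 ^ (e * j1) = 2 ^ (e * j2) → j1 = j2 := by
      intro j1 j2 h
      have := Nat.pow_right_injective (le_refl 2) h
      exact Nat.eq_of_mul_eq_mul_left he this
    have hPcoeff : P.coeff (2 ^ (e * D)) = t.leadingCoeff := by
      rw [hPdef, Polynomial.finset_sum_coeff]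
      rw [Finset.sum_eq_single D]
      · rw [Polynomial.coeff_C_mul, Polynomial.coeff_X_pow, if_pos rfl, mul_one]
        rfl
      · intro j _ hj
        rw [Polynomial.coeff_C_mul, Polynomial.coeff_X_pow,
          if_neg (fun h => hj (hexpinj _ _ h.symm)), mul_zero]
      · intro h; exact absurd (Finset.self_mem_range_succ D) h
    have hP0 : P ≠ 0 := fun h => Polynomial.leadingCoeff_ne_zero.mpr ht0 (by
      rw [← hPcoeff, h, Polynomial.coeff_zero])
    have hPdeg : P.natDegree ≤ 2 ^ (e * D) := by
      rw [hPdef]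
      refine Polynomial.natDegree_sum_le_of_forall_le _ _ fun j hj => ?_
      calc (Polynomial.C (t.coeff j) * Polynomial.X ^ 2 ^ (e * j)).natDegree
          ≤ 2 ^ (e * j) := by
            have h1 := Polynomial.natDegree_C_mul_le (t.coeff j)
              ((Polynomial.X : K[X]) ^ 2 ^ (e * j))
            have h2 := Polynomial.natDegree_X_pow_le (R := K) (2 ^ (e * j))
            omega
        _ ≤ 2 ^ (e * D) := Nat.pow_le_pow_right (by norm_num)
            (Nat.mul_le_mul_left e (by
              simp only [Finset.mem_range] at hj; omega))
    have hroot : ∀ x : K, P.eval (lpoly e d x) = 0 := by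
      intro x
      rw [heval, ← lpoly_mul e d t hdfix, mul_comm, ← ht, hq',
        lpoly_Xpow_add_one, hcard, CharTwo.add_self_eq_zero]
    -- counting
    have hcount : Fintype.card K ≤ P.roots.toFinset.card := by
      have := Finset.card_le_card_of_injOn (f := fun x => lpoly e d x)
        (s := Finset.univ) (t := P.roots.toFinset)
        (fun x _ => by
          rw [Finset.mem_coe, Multiset.mem_toFinset, Polynomial.mem_roots hP0]
          exact hroot x)
        (fun x _ y _ h => hinj h)
      simpa using this
    have hbound : P.roots.toFinset.card ≤ 2 ^ (e * D) :=
      le_trans (Multiset.toFinset_card_le _)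
        (le_trans (Polynomial.card_roots' P) hPdeg)
    have hlt : 2 ^ (e * D) < 2 ^ (e * m) := by
      apply Nat.pow_lt_pow_right (by norm_num)
      have hDm : D < m := by omega
      exact (Nat.mul_lt_mul_left he).mpr hDm
    rw [hK] at hcount
    omega
  · -- coprime → kernel trivial
    rintro ⟨u, v, huv⟩ x hx
    have h1 : lpoly e (u * p + v * ((Polynomial.X : K[X]) ^ m + 1)) x = x := by
      rw [huv, lpoly_one]
    rw [lpoly_add, lpoly_mul e p u hp, hx, lpoly_at_zero,
      lpoly_mul e _ v (coeff_Xpow_add_one_fix e m), lpoly_Xpow_add_one, hcard,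
      CharTwo.add_self_eq_zero, lpoly_at_zero, add_zero] at h1
    exact h1.symm
end PartB

section PartA
variable {K : Type} [Field K] [CharP K 2] [Fintype K]

lemma trsum_bit (n : ℕ) (hK : Fintype.card K = 2 ^ n) (y : K) :
    (trsum n y) ^ 2 = trsum n y := by
  have hy : y ^ 2 ^ n = y := by rw [← hK]; exact FiniteField.pow_card y
  rw [trsum_sq, hy, add_assoc, CharTwo.add_self_eq_zero, add_zero]

lemma exists_trsum_one (n : ℕ) (hn : 0 < n) (hK : Fintype.card K = 2 ^ n)
    (w : K) (hw : w ≠ 0) : ∃ x : K, trsum n (x * w) = 1 := by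
  by_contra hcon
  push_neg at hcon
  have hzero : ∀ y : K, trsum n y = 0 := by
    intro y
    have h1 : (y * w⁻¹) * w = y := by field_simp
    have h2 := hcon (y * w⁻¹)
    rcases bit_cases (trsum_bit n hK (y * w⁻¹ * w)) with h | h
    · rwa [h1] at h
    · exact absurd h h2
  set P : K[X] := ∑ j ∈ Finset.range n, Polynomial.X ^ 2 ^ j with hPdef
  have heval : ∀ y : K, P.eval y = trsum n y := by
    intro y
    rw [hPdef, Polynomial.eval_finset_sum]
    unfold trsum
    exact Finset.sum_congr rfl fun j _ => by simp
  have hexpinj : ∀ j1 j2 : ℕ, 2 ^ j1 = 2 ^ j2 → j1 = j2 := fun _ _ h =>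
    Nat.pow_right_injective (le_refl 2) h
  have hPcoeff : P.coeff (2 ^ (n - 1)) = 1 := by
    rw [hPdef, Polynomial.finset_sum_coeff, Finset.sum_eq_single (n - 1)]
    · rw [Polynomial.coeff_X_pow, if_pos rfl]
    · intro j _ hj
      rw [Polynomial.coeff_X_pow, if_neg (fun h => hj (hexpinj _ _ h.symm))]
    · intro h
      exact absurd (Finset.mem_range.mpr (by omega)) h
  have hP0 : P ≠ 0 := fun h => one_ne_zero (α := K) (by rw [← hPcoeff, h, Polynomial.coeff_zero])
  have hPdeg : P.natDegree ≤ 2 ^ (n - 1) := by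
    rw [hPdef]
    refine Polynomial.natDegree_sum_le_of_forall_le _ _ fun j hj => ?_
    calc ((Polynomial.X : K[X]) ^ 2 ^ j).natDegree ≤ 2 ^ j :=
          Polynomial.natDegree_X_pow_le _
      _ ≤ 2 ^ (n - 1) := Nat.pow_le_pow_right (by norm_num)
          (by simp only [Finset.mem_range] at hj; omega)
  have hcount : Fintype.card K ≤ P.roots.toFinset.card := by
    have := Finset.card_le_card_of_injOn (f := fun x : K => x)
      (s := Finset.univ) (t := P.roots.toFinset)
      (fun x _ => by
        rw [Finset.mem_coe, Multiset.mem_toFinset, Polynomial.mem_roots hP0]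
        exact (by rw [Polynomial.IsRoot, heval, hzero]))
      (fun x _ y _ h => h)
    simpa using this
  have hbound : P.roots.toFinset.card ≤ 2 ^ (n - 1) :=
    le_trans (Multiset.toFinset_card_le _) (le_trans (Polynomial.card_roots' P) hPdeg)
  have hlt : 2 ^ (n - 1) < 2 ^ n := Nat.pow_lt_pow_right (by norm_num) (by omega)
  rw [hK] at hcount
  omega

lemma sum_chi_eq_zero (φ : K → K) (hbit : ∀ x, φ x ^ 2 = φ x)
    (x0 : K) (hx0 : φ x0 = 1) (hadd : ∀ x, φ (x + x0) = φ x + φ x0) :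
    ∑ x : K, chi (φ x) = 0 := by
  have h : ∑ x : K, chi (φ (x + x0)) = ∑ x : K, chi (φ x) :=
    Fintype.sum_bijective (· + x0) (Equiv.addRight x0).bijective _ _ (fun x => rfl)
  have h2 : ∑ x : K, chi (φ (x + x0)) = ∑ x : K, -chi (φ x) := by
    refine Finset.sum_congr rfl fun x _ => ?_
    rw [hadd, hx0, chi_add_one (hbit x)]
  rw [h2, Finset.sum_neg_distrib] at h
  omega

theorem bent_crit (n hn : ℕ) (hn0 : 0 < hn) (hnn : n = 2 * hn)
    (hK : Fintype.card K = 2 ^ n) (F L : K → K)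
    (hFbit : ∀ x, F x ^ 2 = F x) (hF0 : F 0 = 0)
    (hB : ∀ x z, F (x + z) + F x + F z = trsum n (z * L x))
    (hLadd : ∀ x y, L (x + y) = L x + L y) :
    (∀ b : K, (∑ x : K, chi (F x + trsum n (b * x))) = 2 ^ hn ∨
       (∑ x : K, chi (F x + trsum n (b * x))) = -2 ^ hn) ↔
    (∀ x : K, L x = 0 → x = 0) := by
  have hn0' : 0 < n := by omega
  have h2z : (2 : K) = 0 := two_zero
  have hsym : ∀ x z : K, trsum n (z * L x) = trsum n (x * L z) := by
    intro x z
    rw [← hB, ← hB, add_comm x z]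
    ring
  have hGbit : ∀ b x : K, (F x + trsum n (b * x)) ^ 2 = F x + trsum n (b * x) :=
    fun b x => bit_add (hFbit x) (trsum_bit n hK _)
  constructor
  · -- Walsh condition → kernel trivial
    intro hW z hLz
    by_contra hz0
    have hFadd : ∀ x : K, F (z + x) = F x + F z := by
      intro x
      have h1 := hB z x
      rw [hLz, mul_zero, trsum_zero_arg] at h1
      linear_combination h1 - (F x + F z) * h2z
    obtain ⟨b0, hb0⟩ := exists_trsum_one n hn0' hK z hz0
    have hmain : ∀ b : K, F z + trsum n (b * z) = 1 →
        (∑ x : K, chi (F x + trsum n (b * x))) = 0 := by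
      intro b hbz
      set W := ∑ x : K, chi (F x + trsum n (b * x)) with hWdef
      have hre : ∑ x : K, chi (F (z + x) + trsum n (b * (z + x))) = W :=
        Fintype.sum_bijective (z + ·) (Equiv.addLeft z).bijective _ _ (fun x => rfl)
      have hterm : ∀ x : K, F (z + x) + trsum n (b * (z + x))
          = (F x + trsum n (b * x)) + 1 := by
        intro x
        rw [hFadd, mul_add, trsum_add_arg, ← hbz]
        ring
      have h2 : ∑ x : K, chi (F (z + x) + trsum n (b * (z + x))) = -W := by
        rw [hWdef, ← Finset.sum_neg_distrib]
        refine Finset.sum_congr rfl fun x _ => ?_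
        rw [hterm, chi_add_one (hGbit b x)]
      rw [h2] at hre
      omega
    rcases bit_cases (hFbit z) with hFz | hFz
    · have h1 : F z + trsum n (b0 * z) = 1 := by rw [hFz, hb0, zero_add]
      rcases hW b0 with h | h <;> rw [hmain b0 h1] at h <;>
        [exact absurd h.symm (by positivity); exact absurd h (by
          have : (0:ℤ) < 2 ^ hn := by positivity
          omega)]
    · have h1 : F z + trsum n ((0:K) * z) = 1 := by
        rw [hFz, zero_mul, trsum_zero_arg, add_zero]
      rcases hW 0 with h | h <;> rw [hmain 0 h1] at h <;>
        [exact absurd h.symm (by positivity); exact absurd h (by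
          have : (0:ℤ) < 2 ^ hn := by positivity
          omega)]
  · -- kernel trivial → Walsh condition
    intro hker b
    set W := ∑ x : K, chi (F x + trsum n (b * x)) with hWdef
    have hWsq : W * W = 2 ^ n := by
      have step1 : W * W = ∑ x : K, ∑ y : K,
          chi (F x + trsum n (b * x)) * chi (F y + trsum n (b * y)) := by
        rw [hWdef, Finset.sum_mul_sum]
      have step2 : ∀ x : K, ∑ y : K, chi (F x + trsum n (b * x)) * chi (F y + trsum n (b * y))
          = ∑ z : K, chi (trsum n (z * L x)) * chi (F z + trsum n (b * z)) := by
        intro x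
        have hre : ∑ z : K, chi (F x + trsum n (b * x)) * chi (F (x + z) + trsum n (b * (x + z)))
            = ∑ y : K, chi (F x + trsum n (b * x)) * chi (F y + trsum n (b * y)) :=
          Fintype.sum_bijective (x + ·) (Equiv.addLeft x).bijective _ _ (fun z => rfl)
        rw [← hre]
        refine Finset.sum_congr rfl fun z _ => ?_
        rw [← chi_add (hGbit b x) (hGbit b (x + z)),
            ← chi_add (trsum_bit n hK _) (bit_add (hFbit z) (trsum_bit n hK _))]
        congr 1
        have h1 := hB x z
        have h2 : trsum n (b * (x + z)) = trsum n (b * x) + trsum n (b * z) := by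
          rw [mul_add, trsum_add_arg]
        linear_combination h1 + h2 + (trsum n (b * x) - F z) * h2z
      have step3 : W * W = ∑ z : K,
          chi (F z + trsum n (b * z)) * (∑ x : K, chi (trsum n (z * L x))) := by
        rw [step1]
        rw [Finset.sum_congr rfl fun x _ => step2 x]
        rw [Finset.sum_comm]
        refine Finset.sum_congr rfl fun z _ => ?_
        rw [Finset.mul_sum]
        exact Finset.sum_congr rfl fun x _ => by ring
      have hS : ∀ z : K, z ≠ 0 → (∑ x : K, chi (trsum n (z * L x))) = 0 := by
        intro z hz
        have hLz : L z ≠ 0 := fun h => hz (hker z h)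
        obtain ⟨x0, hx0⟩ := exists_trsum_one n hn0' hK (L z) hLz
        refine sum_chi_eq_zero (fun x => trsum n (z * L x)) (fun x => trsum_bit n hK _)
          x0 (by show trsum n (z * L x0) = 1; rw [hsym]; exact hx0) (fun x => ?_)
        show trsum n (z * L (x + x0)) = trsum n (z * L x) + trsum n (z * L x0)
        rw [hLadd, mul_add, trsum_add_arg]
      have hS0 : (∑ x : K, chi (trsum n ((0:K) * L x))) = 2 ^ n := by
        have : ∀ x : K, chi (trsum n ((0:K) * L x)) = 1 := fun x => by
          rw [zero_mul, trsum_zero_arg, chi_zero]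
        rw [Finset.sum_congr rfl fun x _ => this x]
        simp [hK]
      rw [step3, Finset.sum_eq_single 0]
      · rw [hS0, hF0, mul_zero, trsum_zero_arg, add_zero, chi_zero, one_mul]
      · intro z _ hz
        rw [hS z hz, mul_zero]
      · intro h
        exact absurd (Finset.mem_univ 0) h
    have h2n : (2:ℤ) ^ n = 2 ^ hn * 2 ^ hn := by
      rw [hnn, two_mul, pow_add]
    rw [h2n] at hWsq
    rcases mul_self_eq_mul_self_iff.mp hWsq with h | h
    · exact Or.inl h
    · exact Or.inr (by omega)
end PartA

section Inst
variable {K : Type} [Field K] [CharP K 2] [Fintype K]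

lemma trsum_pow_shift (n : ℕ) (hK : Fintype.card K = 2 ^ n) (y : K) (t : ℕ) :
    trsum n (y ^ 2 ^ t) = trsum n y := by
  induction t with
  | zero => simp
  | succ t ih =>
    have h : y ^ 2 ^ (t + 1) = (y ^ 2 ^ t) ^ 2 := by
      rw [← pow_mul, pow_succ]
    rw [h, trsum_arg_sq, trsum_bit n hK, ih]

lemma expand_quad (k : ℕ) (cc x z : K) :
    cc * (x + z) ^ (1 + 2 ^ k) = cc * x ^ (1 + 2 ^ k) + cc * z ^ (1 + 2 ^ k)
      + cc * (x * z ^ 2 ^ k) + cc * (z * x ^ 2 ^ k) := by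
  haveI : Fact (Nat.Prime 2) := ⟨Nat.prime_two⟩
  have h := add_pow_char_pow x z 2 k
  calc cc * (x + z) ^ (1 + 2 ^ k) = cc * ((x + z) * (x + z) ^ 2 ^ k) := by
        rw [pow_add, pow_one]
    _ = cc * ((x + z) * (x ^ 2 ^ k + z ^ 2 ^ k)) := by rw [h]
    _ = cc * (x * x ^ 2 ^ k) + cc * (z * z ^ 2 ^ k)
        + cc * (x * z ^ 2 ^ k) + cc * (z * x ^ 2 ^ k) := by ring
    _ = _ := by rw [← pow_succ', ← pow_succ']; ring_nf

lemma Bterm (n k k' : ℕ) (hkk' : k + k' = n) (hK : Fintype.card K = 2 ^ n)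
    (cc x z : K) (hfix : cc ^ 2 ^ k' = cc) :
    trsum n (cc * (x + z) ^ (1 + 2 ^ k)) + trsum n (cc * x ^ (1 + 2 ^ k))
      + trsum n (cc * z ^ (1 + 2 ^ k))
    = trsum n (z * (cc * (x ^ 2 ^ k + x ^ 2 ^ k'))) := by
  have hcard : ∀ w : K, w ^ 2 ^ n = w := fun w => by rw [← hK]; exact FiniteField.pow_card w
  have h1 : trsum n (cc * (x + z) ^ (1 + 2 ^ k))
      = trsum n (cc * x ^ (1 + 2 ^ k)) + trsum n (cc * z ^ (1 + 2 ^ k))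
        + trsum n (cc * (x * z ^ 2 ^ k)) + trsum n (cc * (z * x ^ 2 ^ k)) := by
    rw [expand_quad, trsum_add_arg, trsum_add_arg, trsum_add_arg]
  have h2 : trsum n (cc * (x * z ^ 2 ^ k)) = trsum n (z * (cc * x ^ 2 ^ k')) := by
    have hzz : (2:ℕ) ^ k * 2 ^ k' = 2 ^ n := by rw [← pow_add, hkk']
    have hcomp : (cc * (x * z ^ 2 ^ k)) ^ 2 ^ k' = z * (cc * x ^ 2 ^ k') := by
      rw [mul_pow, mul_pow, ← pow_mul z, hzz, hcard z, hfix]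
      ring
    rw [← trsum_pow_shift n hK _ k', hcomp]
  have h3 : trsum n (cc * (z * x ^ 2 ^ k)) = trsum n (z * (cc * x ^ 2 ^ k)) := by
    ring_nf
  rw [h1, h2, h3]
  have hR : trsum n (z * (cc * (x ^ 2 ^ k + x ^ 2 ^ k')))
      = trsum n (z * (cc * x ^ 2 ^ k)) + trsum n (z * (cc * x ^ 2 ^ k')) := by
    rw [← trsum_add_arg]
    congr 1
    ring
  rw [hR]
  have ha := CharTwo.add_self_eq_zero (trsum n (cc * x ^ (1 + 2 ^ k)))
  have hb := CharTwo.add_self_eq_zero (trsum n (cc * z ^ (1 + 2 ^ k)))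
  linear_combination ha + hb

lemma Bhalf (hn : ℕ) (hK : Fintype.card K = 2 ^ (2 * hn)) (cc x z : K)
    (hfix : cc ^ 2 ^ hn = cc) :
    trsum hn (cc * (x + z) ^ (1 + 2 ^ hn)) + trsum hn (cc * x ^ (1 + 2 ^ hn))
      + trsum hn (cc * z ^ (1 + 2 ^ hn))
    = trsum (2 * hn) (z * (cc * x ^ 2 ^ hn)) := by
  have hcard : ∀ w : K, w ^ 2 ^ (2 * hn) = w := fun w => by
    rw [← hK]; exact FiniteField.pow_card w
  have h1 : trsum hn (cc * (x + z) ^ (1 + 2 ^ hn))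
      = trsum hn (cc * x ^ (1 + 2 ^ hn)) + trsum hn (cc * z ^ (1 + 2 ^ hn))
        + trsum hn (cc * (x * z ^ 2 ^ hn)) + trsum hn (cc * (z * x ^ 2 ^ hn)) := by
    rw [expand_quad, trsum_add_arg, trsum_add_arg, trsum_add_arg]
  set u := z * (cc * x ^ 2 ^ hn) with hudef
  have hu1 : cc * (z * x ^ 2 ^ hn) = u := by rw [hudef]; ring
  have hu2 : cc * (x * z ^ 2 ^ hn) = u ^ 2 ^ hn := by
    rw [hudef, mul_pow, mul_pow, ← pow_mul, ← pow_add, hfix]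
    have h2hn : hn + hn = 2 * hn := by ring
    rw [h2hn, hcard]
    ring
  have hsplit : trsum (2 * hn) u = trsum hn u + trsum hn (u ^ 2 ^ hn) := by
    rw [two_mul, trsum_split]
  rw [h1, hu1, hu2, hsplit]
  have ha := CharTwo.add_self_eq_zero (trsum hn (cc * x ^ (1 + 2 ^ hn)))
  have hb := CharTwo.add_self_eq_zero (trsum hn (cc * z ^ (1 + 2 ^ hn)))
  linear_combination ha + hb

lemma half_bit (hn : ℕ) (hK : Fintype.card K = 2 ^ (2 * hn)) (cc x : K)
    (hfix : cc ^ 2 ^ hn = cc) :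
    (trsum hn (cc * x ^ (1 + 2 ^ hn))) ^ 2 = trsum hn (cc * x ^ (1 + 2 ^ hn)) := by
  have hcard : ∀ w : K, w ^ 2 ^ (2 * hn) = w := fun w => by
    rw [← hK]; exact FiniteField.pow_card w
  have hy : (cc * x ^ (1 + 2 ^ hn)) ^ 2 ^ hn = cc * x ^ (1 + 2 ^ hn) := by
    rw [mul_pow, hfix, ← pow_mul]
    congr 1
    have : (1 + 2 ^ hn) * 2 ^ hn = 2 ^ hn + 2 ^ (2 * hn) := by
      rw [add_mul, one_mul, ← pow_add, two_mul]
    rw [this, pow_add, hcard, pow_add, pow_one]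
    ring
  rw [trsum_sq, hy, add_assoc, CharTwo.add_self_eq_zero, add_zero]
end Inst
section Fix
variable {K : Type} [Field K] [CharP K 2]

lemma fix_add (e : ℕ) {a b : K} (ha : a ^ 2 ^ e = a) (hb : b ^ 2 ^ e = b) :
    (a + b) ^ 2 ^ e = a + b := by
  haveI : Fact (Nat.Prime 2) := ⟨Nat.prime_two⟩
  rw [add_pow_char_pow a b 2 e, ha, hb]

omit [CharP K 2] in
lemma fix_mul (e : ℕ) {a b : K} (ha : a ^ 2 ^ e = a) (hb : b ^ 2 ^ e = b) :
    (a * b) ^ 2 ^ e = a * b := by rw [mul_pow, ha, hb]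

omit [CharP K 2] in
lemma fix_ite (e : ℕ) (P : Prop) [Decidable P] :
    ((if P then (1:K) else 0)) ^ 2 ^ e = if P then 1 else 0 := by
  split_ifs
  · exact one_pow _
  · exact zero_pow (by positivity)

lemma fix_sum (e : ℕ) {ι : Type*} (s : Finset ι) (f : ι → K)
    (h : ∀ i ∈ s, (f i) ^ 2 ^ e = f i) :
    (∑ i ∈ s, f i) ^ 2 ^ e = ∑ i ∈ s, f i := by
  haveI : Fact (Nat.Prime 2) := ⟨Nat.prime_two⟩
  rw [sum_pow_char_pow]
  exact Finset.sum_congr rfl h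

end Fix

theorem stmt10 (e m2 : ℕ) (he : 0 < e) (hm2 : 0 < m2)
    (K : Type) [Field K] [Fintype K] (hK : Fintype.card K = 2 ^ (e * (2 * m2)))
    (c : ℕ → K) (hc : ∀ i, c i ^ (2 ^ e) = c i) :
    ((∀ b : K,
        (∑ x : K, chi ((∑ i ∈ Finset.Icc 1 (m2 - 1),
              trsum (e * (2 * m2)) (c i * x ^ (1 + 2 ^ (e * i)))) +
            trsum (e * m2) (c m2 * x ^ (1 + 2 ^ (e * m2))) +
            trsum (e * (2 * m2)) (b * x))) = 2 ^ (e * m2) ∨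
        (∑ x : K, chi ((∑ i ∈ Finset.Icc 1 (m2 - 1),
              trsum (e * (2 * m2)) (c i * x ^ (1 + 2 ^ (e * i)))) +
            trsum (e * m2) (c m2 * x ^ (1 + 2 ^ (e * m2))) +
            trsum (e * (2 * m2)) (b * x))) = -2 ^ (e * m2)) ↔
      IsCoprime
        ((∑ i ∈ Finset.Icc 1 (m2 - 1), C (c i) * (X ^ i + X ^ (2 * m2 - i))) +
          C (c m2) * X ^ m2)
        (X ^ (2 * m2) + 1 : K[X])) ∧
    ((∀ b : K,
        (∑ x : K, chi ((∑ i ∈ Finset.Icc 1 (m2 - 1),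
              trsum (e * (2 * m2)) (c i * x ^ (1 + 2 ^ (e * i)))) +
            trsum (e * m2) (c m2 * x ^ (1 + 2 ^ (e * m2))) +
            trsum (e * (2 * m2)) (b * x))) = 2 ^ (e * m2) ∨
        (∑ x : K, chi ((∑ i ∈ Finset.Icc 1 (m2 - 1),
              trsum (e * (2 * m2)) (c i * x ^ (1 + 2 ^ (e * i)))) +
            trsum (e * m2) (c m2 * x ^ (1 + 2 ^ (e * m2))) +
            trsum (e * (2 * m2)) (b * x))) = -2 ^ (e * m2)) →
      c m2 ≠ 0) := by
  classical
  -- characteristic 2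
  obtain ⟨p, hp⟩ := CharP.exists K
  haveI := hp
  obtain ⟨k, hpk, hcard⟩ := FiniteField.card K p
  have hp2 : p = 2 := by
    have hdvd : p ∣ 2 ^ (e * (2 * m2)) := by
      rw [← hK, hcard]
      exact dvd_pow_self p k.ne_zero
    have h2 := Nat.Prime.dvd_of_dvd_pow hpk hdvd
    exact (Nat.prime_dvd_prime_iff_eq hpk Nat.prime_two).mp h2
  subst hp2
  haveI hchar2 : CharP K 2 := hp
  haveI : Fact (Nat.Prime 2) := ⟨Nat.prime_two⟩
  have hn0 : 0 < e * m2 := by positivity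
  have hnn : e * (2 * m2) = 2 * (e * m2) := by ring
  have hKhalf : Fintype.card K = 2 ^ (2 * (e * m2)) := by rw [hK]; congr 1
  -- the concrete quadratic function and its linear radical map
  set Fc : K → K := fun x =>
    (∑ i ∈ Finset.Icc 1 (m2 - 1), trsum (e * (2 * m2)) (c i * x ^ (1 + 2 ^ (e * i)))) +
      trsum (e * m2) (c m2 * x ^ (1 + 2 ^ (e * m2))) with hFcdef
  set Lc : K → K := fun x =>
    (∑ i ∈ Finset.Icc 1 (m2 - 1),
        c i * (x ^ 2 ^ (e * i) + x ^ 2 ^ (e * (2 * m2 - i)))) +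
      c m2 * x ^ 2 ^ (e * m2) with hLcdef
  have hFbit : ∀ x : K, (Fc x) ^ 2 = Fc x := by
    intro x
    apply bit_add
    · exact bit_sum _ _ fun i _ => trsum_bit _ hK _
    · exact half_bit (e * m2) hKhalf (c m2) x (fix_iter (hc m2) m2)
  have hF0 : Fc 0 = 0 := by
    show (∑ i ∈ Finset.Icc 1 (m2 - 1),
        trsum (e * (2 * m2)) (c i * (0:K) ^ (1 + 2 ^ (e * i)))) +
      trsum (e * m2) (c m2 * (0:K) ^ (1 + 2 ^ (e * m2))) = 0
    have h1 : ∀ i ∈ Finset.Icc 1 (m2 - 1),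
        trsum (e * (2 * m2)) (c i * (0:K) ^ (1 + 2 ^ (e * i))) = 0 := by
      intro i _
      rw [zero_pow (by positivity), mul_zero, trsum_zero_arg]
    rw [Finset.sum_eq_zero h1, zero_add, zero_pow (by positivity), mul_zero, trsum_zero_arg]
  have hLadd : ∀ x y : K, Lc (x + y) = Lc x + Lc y := by
    intro x y
    show (∑ i ∈ Finset.Icc 1 (m2 - 1),
        c i * ((x+y) ^ 2 ^ (e * i) + (x+y) ^ 2 ^ (e * (2 * m2 - i)))) +
      c m2 * (x+y) ^ 2 ^ (e * m2) = _
    have hterm : ∀ i ∈ Finset.Icc 1 (m2 - 1),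
        c i * ((x+y) ^ 2 ^ (e * i) + (x+y) ^ 2 ^ (e * (2 * m2 - i)))
        = c i * (x ^ 2 ^ (e * i) + x ^ 2 ^ (e * (2 * m2 - i)))
          + c i * (y ^ 2 ^ (e * i) + y ^ 2 ^ (e * (2 * m2 - i))) := by
      intro i _
      rw [add_pow_char_pow x y 2 (e * i), add_pow_char_pow x y 2 (e * (2 * m2 - i))]
      ring
    rw [Finset.sum_congr rfl hterm, Finset.sum_add_distrib,
      add_pow_char_pow x y 2 (e * m2)]
    show _ = (∑ i ∈ Finset.Icc 1 (m2 - 1),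
        c i * (x ^ 2 ^ (e * i) + x ^ 2 ^ (e * (2 * m2 - i)))) + c m2 * x ^ 2 ^ (e * m2)
      + ((∑ i ∈ Finset.Icc 1 (m2 - 1),
        c i * (y ^ 2 ^ (e * i) + y ^ 2 ^ (e * (2 * m2 - i)))) + c m2 * y ^ 2 ^ (e * m2))
    ring
  have hB : ∀ x z : K, Fc (x + z) + Fc x + Fc z = trsum (e * (2 * m2)) (z * Lc x) := by
    intro x z
    have hgroup : Fc (x + z) + Fc x + Fc z
        = (∑ i ∈ Finset.Icc 1 (m2 - 1),
            (trsum (e * (2 * m2)) (c i * (x + z) ^ (1 + 2 ^ (e * i)))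
              + trsum (e * (2 * m2)) (c i * x ^ (1 + 2 ^ (e * i)))
              + trsum (e * (2 * m2)) (c i * z ^ (1 + 2 ^ (e * i)))))
          + (trsum (e * m2) (c m2 * (x + z) ^ (1 + 2 ^ (e * m2)))
              + trsum (e * m2) (c m2 * x ^ (1 + 2 ^ (e * m2)))
              + trsum (e * m2) (c m2 * z ^ (1 + 2 ^ (e * m2)))) := by
      show (∑ i ∈ Finset.Icc 1 (m2 - 1),
          trsum (e * (2 * m2)) (c i * (x+z) ^ (1 + 2 ^ (e * i)))) +
        trsum (e * m2) (c m2 * (x+z) ^ (1 + 2 ^ (e * m2)))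
        + ((∑ i ∈ Finset.Icc 1 (m2 - 1),
          trsum (e * (2 * m2)) (c i * x ^ (1 + 2 ^ (e * i)))) +
        trsum (e * m2) (c m2 * x ^ (1 + 2 ^ (e * m2))))
        + ((∑ i ∈ Finset.Icc 1 (m2 - 1),
          trsum (e * (2 * m2)) (c i * z ^ (1 + 2 ^ (e * i)))) +
        trsum (e * m2) (c m2 * z ^ (1 + 2 ^ (e * m2)))) = _
      rw [Finset.sum_add_distrib, Finset.sum_add_distrib]
      ring
    rw [hgroup]
    have hterm : ∀ i ∈ Finset.Icc 1 (m2 - 1),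
        trsum (e * (2 * m2)) (c i * (x + z) ^ (1 + 2 ^ (e * i)))
          + trsum (e * (2 * m2)) (c i * x ^ (1 + 2 ^ (e * i)))
          + trsum (e * (2 * m2)) (c i * z ^ (1 + 2 ^ (e * i)))
        = trsum (e * (2 * m2))
            (z * (c i * (x ^ 2 ^ (e * i) + x ^ 2 ^ (e * (2 * m2 - i))))) := by
      intro i hi
      simp only [Finset.mem_Icc] at hi
      have hkk' : e * i + e * (2 * m2 - i) = e * (2 * m2) := by
        rw [← Nat.mul_add]
        congr 1
        omega
      exact Bterm _ _ _ hkk' hK (c i) x z (fix_iter (hc i) (2 * m2 - i))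
    rw [Finset.sum_congr rfl hterm]
    have hhalf := Bhalf (e * m2) hKhalf (c m2) x z (fix_iter (hc m2) m2)
    rw [show 2 * (e * m2) = e * (2 * m2) by ring] at hhalf
    rw [hhalf, ← trsum_sum, ← trsum_add_arg]
    congr 1
    show _ = z * ((∑ i ∈ Finset.Icc 1 (m2 - 1),
        c i * (x ^ 2 ^ (e * i) + x ^ 2 ^ (e * (2 * m2 - i)))) + c m2 * x ^ 2 ^ (e * m2))
    rw [mul_add, Finset.mul_sum]
  have hbent := bent_crit (e * (2 * m2)) (e * m2) hn0 hnn hK Fc Lc hFbit hF0 hB hLadd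
  -- the associated polynomial
  have hcffix : ∀ j, ((((∑ i ∈ Finset.Icc 1 (m2 - 1),
      Polynomial.C (c i) * (Polynomial.X ^ i + Polynomial.X ^ (2 * m2 - i))) +
      Polynomial.C (c m2) * Polynomial.X ^ m2 : K[X])).coeff j) ^ 2 ^ e
      = (((∑ i ∈ Finset.Icc 1 (m2 - 1),
      Polynomial.C (c i) * (Polynomial.X ^ i + Polynomial.X ^ (2 * m2 - i))) +
      Polynomial.C (c m2) * Polynomial.X ^ m2 : K[X])).coeff j := by
    intro j
    rw [Polynomial.coeff_add, Polynomial.finset_sum_coeff]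
    apply fix_add
    · apply fix_sum
      intro i _
      rw [Polynomial.coeff_C_mul, Polynomial.coeff_add, Polynomial.coeff_X_pow,
        Polynomial.coeff_X_pow]
      exact fix_mul e (hc i) (fix_add e (fix_ite e _) (fix_ite e _))
    · rw [Polynomial.coeff_C_mul, Polynomial.coeff_X_pow]
      exact fix_mul e (hc m2) (fix_ite e _)
  have hLcf : ∀ x : K, lpoly e ((∑ i ∈ Finset.Icc 1 (m2 - 1),
      Polynomial.C (c i) * (Polynomial.X ^ i + Polynomial.X ^ (2 * m2 - i))) +
      Polynomial.C (c m2) * Polynomial.X ^ m2) x = Lc x := by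
    intro x
    rw [lpoly_add, lpoly_sum, lpoly_monomial]
    show _ = (∑ i ∈ Finset.Icc 1 (m2 - 1),
        c i * (x ^ 2 ^ (e * i) + x ^ 2 ^ (e * (2 * m2 - i)))) + c m2 * x ^ 2 ^ (e * m2)
    congr 1
    refine Finset.sum_congr rfl fun i _ => ?_
    rw [mul_add (Polynomial.C (c i)), lpoly_add, lpoly_monomial, lpoly_monomial, mul_add]
  have hker := ker_lpoly_iff_coprime e (2 * m2) he (by omega) hK
    ((∑ i ∈ Finset.Icc 1 (m2 - 1),
      Polynomial.C (c i) * (Polynomial.X ^ i + Polynomial.X ^ (2 * m2 - i))) +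
      Polynomial.C (c m2) * Polynomial.X ^ m2) hcffix
  simp only [hLcf] at hker
  have hiff1 := hbent.trans hker
  refine ⟨hiff1, ?_⟩
  intro hW hc0
  obtain ⟨u, v, huv⟩ := hiff1.mp hW
  have he1 := congrArg (Polynomial.eval (1 : K)) huv
  have hcf1 : Polynomial.eval (1 : K) ((∑ i ∈ Finset.Icc 1 (m2 - 1),
      Polynomial.C (c i) * (Polynomial.X ^ i + Polynomial.X ^ (2 * m2 - i))) +
      Polynomial.C (c m2) * Polynomial.X ^ m2) = 0 := by
    rw [Polynomial.eval_add, Polynomial.eval_finset_sum]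
    have h1 : ∀ i ∈ Finset.Icc 1 (m2 - 1),
        Polynomial.eval (1:K) (Polynomial.C (c i) *
          (Polynomial.X ^ i + Polynomial.X ^ (2 * m2 - i))) = 0 := by
      intro i _
      simp [CharTwo.add_self_eq_zero]
    rw [Finset.sum_eq_zero h1, zero_add]
    simp [hc0]
  have hq1 : Polynomial.eval (1 : K) ((Polynomial.X : K[X]) ^ (2 * m2) + 1) = 0 := by
    simp [CharTwo.add_self_eq_zero]
  rw [Polynomial.eval_add, Polynomial.eval_mul, Polynomial.eval_mul, hcf1, hq1,
    Polynomial.eval_one, mul_zero, mul_zero, add_zero] at he1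
  exact zero_ne_one he1
end
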